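/- arXiv:2304.01779 — 8 statements merged into one kernel-verified Lean document; each statement's English description precedes it below -/
import Mathlib

section
/- Let 0 < μ ≤ L, m ∈ (0,1), φ ∈ [0,1), ρ ∈ [0,1), λ̄ > 0, 0 < γ ≤ 1, α > 0 and ζ₁,…,ζ₅ > 0 be real numbers satisfying: 2·√φ·γ·λ̄·(2ζ₁+ζ₂+2ζ₃+ζ₄+ζ₅) ≤ (1−√φ)·ζ₅; γ·λ̄·m·μ ≤ (1−√φ)·L; α ≤ γ(1−ρ)ζ₁/(L(2ζ₃+mζ₁)); α ≤ γ(1−ρ)ζ₃/(L(2ζ₁+2ζ₂+(2+m)ζ₃)); α ≤ γλ̄/(2L); ζ₁+ζ₄+ζ₅ ≤ (1−ρ)ζ₃/(2λ̄); ζ₅ ≤ ζ₄; ζ₄ ≤ (1−ρ)ζ₁/(2λ̄); ζ₁ ≤ mμζ₂/(2L). Set λ̂ = 1−γ(1−ρ) and h = 1−(m/2)αμ. Then the following five inequalities hold: (i) λ̂ζ₁ + αLζ₃ + γλ̄ζ₄ ≤ h·ζ₁; (ii) αLζ₁ + (1−αμ)ζ₂ ≤ h·ζ₂; (iii) L(γλ̄+αL)ζ₁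 + αL²ζ₂ + (αL+λ̂)Lζ₃ + Lγλ̄ζ₄ + Lγλ̄ζ₅ ≤ h·Lζ₃; (iv) √φ(γλ̄+αL)ζ₁ + √φαLζ₂ + √φαLζ₃ + √φ(γλ̄+1)ζ₄ ≤ h·ζ₄; (v) √φL(γλ̄+αL)ζ₁ + √φαL²ζ₂ + √φ(αL+γλ̄)Lζ₃ + √φLγλ̄ζ₄ + √φ(γλ̄+1)Lζ₅ ≤ h·Lζ₅. (Equivalently, the nonnegative 5×5 matrix G with rows (λ̂, 0, α, γλ̄, 0), (αL, 1−αμ, 0, 0, 0), (L(γλ̄+αL), αL², αL+λ̂, Lγλ̄, γλ̄), (√φ(γλ̄+αL), √φαL, √φα, √φ(γλ̄+1), 0), (√φL(γλ̄+αL), √φαL², √φ(αL+γλ̄), √φLγλ̄, √φ(γλ̄+1)) satisfies G·ζ ≤ h·ζ componentwise, where ζ = (ζ₁, ζ₂, Lζ₃, ζ₄, Lζ₅).) -/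
set_option maxHeartbeats 2000000


/-- Lemma 2 of "Compressed Differentially Private Distributed Optimization with
Linear Convergence": under the stated parameter conditions, the explicit positive
vector ζ = (ζ₁, ζ₂, Lζ₃, ζ₄, Lζ₅) satisfies the componentwise inequality
G·ζ ≤ (1 − (m/2)αμ)·ζ for the matrix G of Lemma 1, spelled out as five scalar
inequalities. -/
theorem stmt_0
    (μ L m φ ρ lam γ α ζ₁ ζ₂ ζ₃ ζ₄ ζ₅ lamh h : ℝ)
    (hμ : 0 < μ) (hμL : μ ≤ L)
    (hm0 : 0 < m) (hm1 : m < 1)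
    (hφ0 : 0 ≤ φ) (hφ1 : φ < 1)
    (hρ0 : 0 ≤ ρ) (hρ1 : ρ < 1)
    (hlam : 0 < lam)
    (hγ0 : 0 < γ) (hγ1 : γ ≤ 1)
    (hα : 0 < α)
    (hζ₁ : 0 < ζ₁) (hζ₂ : 0 < ζ₂) (hζ₃ : 0 < ζ₃) (hζ₄ : 0 < ζ₄) (hζ₅ : 0 < ζ₅)
    (hcond1 : 2 * Real.sqrt φ * γ * lam * (2 * ζ₁ + ζ₂ + 2 * ζ₃ + ζ₄ + ζ₅)
        ≤ (1 - Real.sqrt φ) * ζ₅)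
    (hcond2 : γ * lam * m * μ ≤ (1 - Real.sqrt φ) * L)
    (hcond3 : α ≤ γ * (1 - ρ) * ζ₁ / (L * (2 * ζ₃ + m * ζ₁)))
    (hcond4 : α ≤ γ * (1 - ρ) * ζ₃ / (L * (2 * ζ₁ + 2 * ζ₂ + (2 + m) * ζ₃)))
    (hcond5 : α ≤ γ * lam / (2 * L))
    (hcond6 : ζ₁ + ζ₄ + ζ₅ ≤ (1 - ρ) * ζ₃ / (2 * lam))
    (hcond7 : ζ₅ ≤ ζ₄)
    (hcond8 : ζ₄ ≤ (1 - ρ) * ζ₁ / (2 * lam))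
    (hcond9 : ζ₁ ≤ m * μ * ζ₂ / (2 * L))
    (hlamh : lamh = 1 - γ * (1 - ρ))
    (hh : h = 1 - m / 2 * α * μ) :
    (lamh * ζ₁ + α * L * ζ₃ + γ * lam * ζ₄ ≤ h * ζ₁) ∧
    (α * L * ζ₁ + (1 - α * μ) * ζ₂ ≤ h * ζ₂) ∧
    (L * (γ * lam + α * L) * ζ₁ + α * L ^ 2 * ζ₂ + (α * L + lamh) * L * ζ₃
        + L * γ * lam * ζ₄ + L * γ * lam * ζ₅ ≤ h * (L * ζ₃)) ∧
    (Real.sqrt φ * (γ * lam + α * L) * ζ₁ + Real.sqrt φ * α * L * ζ₂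
        + Real.sqrt φ * α * L * ζ₃ + Real.sqrt φ * (γ * lam + 1) * ζ₄ ≤ h * ζ₄) ∧
    (Real.sqrt φ * L * (γ * lam + α * L) * ζ₁ + Real.sqrt φ * α * L ^ 2 * ζ₂
        + Real.sqrt φ * (α * L + γ * lam) * L * ζ₃ + Real.sqrt φ * L * γ * lam * ζ₄
        + Real.sqrt φ * (γ * lam + 1) * L * ζ₅ ≤ h * (L * ζ₅)) := by

  subst hlamh hh
  have hL : 0 < L := lt_of_lt_of_le hμ hμL
  set s := Real.sqrt φ with hs
  have hs0 : 0 ≤ s := Real.sqrt_nonneg φ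
  have hs1 : s < 1 := by
    have := Real.sqrt_lt_sqrt hφ0 hφ1
    simpa [hs] using this
  have hp3 : 0 < L * (2 * ζ₃ + m * ζ₁) := by positivity
  have h3' : α * (L * (2 * ζ₃ + m * ζ₁)) ≤ γ * (1 - ρ) * ζ₁ := (le_div_iff₀ hp3).mp hcond3
  have hp4 : 0 < L * (2 * ζ₁ + 2 * ζ₂ + (2 + m) * ζ₃) := by positivity
  have h4' : α * (L * (2 * ζ₁ + 2 * ζ₂ + (2 + m) * ζ₃)) ≤ γ * (1 - ρ) * ζ₃ :=
    (le_div_iff₀ hp4).mp hcond4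
  have h5' : α * (2 * L) ≤ γ * lam := (le_div_iff₀ (by positivity)).mp hcond5
  have h6' : (ζ₁ + ζ₄ + ζ₅) * (2 * lam) ≤ (1 - ρ) * ζ₃ := (le_div_iff₀ (by positivity)).mp hcond6
  have h8' : ζ₄ * (2 * lam) ≤ (1 - ρ) * ζ₁ := (le_div_iff₀ (by positivity)).mp hcond8
  have h9' : ζ₁ * (2 * L) ≤ m * μ * ζ₂ := (le_div_iff₀ (by positivity)).mp hcond9
  have hαμ : m * (α * μ) ≤ (1 - s) / 2 := by
    nlinarith [mul_le_mul_of_nonneg_left h5' (mul_nonneg hm0.le hμ.le), hcond2, hL]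
  refine ⟨?_, ?_, ?_, ?_, ?_⟩
  · nlinarith [h3', mul_le_mul_of_nonneg_left h8' hγ0.le,
      mul_le_mul_of_nonneg_left hμL (by positivity : (0:ℝ) ≤ m * α * ζ₁)]
  · nlinarith [mul_le_mul_of_nonneg_left h9' hα.le,
      mul_le_mul_of_nonneg_right hm1.le (by positivity : (0:ℝ) ≤ α * μ * ζ₂)]
  · have inner : (γ * lam + α * L) * ζ₁ + α * L * ζ₂
        + (α * L + (1 - γ * (1 - ρ))) * ζ₃ + γ * lam * ζ₄ + γ * lam * ζ₅
        ≤ (1 - m / 2 * α * μ) * ζ₃ := by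
      nlinarith [h4', mul_le_mul_of_nonneg_left h6' hγ0.le,
        mul_le_mul_of_nonneg_left hμL (by positivity : (0:ℝ) ≤ m * α * ζ₃)]
    nlinarith [mul_le_mul_of_nonneg_left inner hL.le]
  · nlinarith [hcond1,
      mul_le_mul_of_nonneg_left h5' (by positivity : (0:ℝ) ≤ s * ζ₁),
      mul_le_mul_of_nonneg_left h5' (by positivity : (0:ℝ) ≤ s * ζ₂),
      mul_le_mul_of_nonneg_left h5' (by positivity : (0:ℝ) ≤ s * ζ₃),
      mul_le_mul_of_nonneg_right hαμ hζ₄.le,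
      mul_le_mul_of_nonneg_left hcond7 (by linarith : (0:ℝ) ≤ 1 - s),
      mul_nonneg (mul_nonneg (mul_nonneg hs0 hγ0.le) hlam.le) hζ₁.le,
      mul_nonneg (mul_nonneg (mul_nonneg hs0 hγ0.le) hlam.le) hζ₂.le,
      mul_nonneg (mul_nonneg (mul_nonneg hs0 hγ0.le) hlam.le) hζ₃.le,
      mul_nonneg (mul_nonneg (mul_nonneg hs0 hγ0.le) hlam.le) hζ₅.le,
      mul_nonneg (by linarith : (0:ℝ) ≤ 1 - s) hζ₄.le]
  · have inner : s * (γ * lam + α * L) * ζ₁ + s * α * L * ζ₂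
        + s * (α * L + γ * lam) * ζ₃ + s * γ * lam * ζ₄ + s * (γ * lam + 1) * ζ₅
        ≤ (1 - m / 2 * α * μ) * ζ₅ := by
      nlinarith [hcond1,
        mul_le_mul_of_nonneg_left h5' (by positivity : (0:ℝ) ≤ s * ζ₁),
        mul_le_mul_of_nonneg_left h5' (by positivity : (0:ℝ) ≤ s * ζ₂),
        mul_le_mul_of_nonneg_left h5' (by positivity : (0:ℝ) ≤ s * ζ₃),
        mul_le_mul_of_nonneg_right hαμ hζ₅.le,
        mul_nonneg (mul_nonneg (mul_nonneg hs0 hγ0.le) hlam.le) hζ₁.le,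
        mul_nonneg (mul_nonneg (mul_nonneg hs0 hγ0.le) hlam.le) hζ₂.le,
        mul_nonneg (mul_nonneg (mul_nonneg hs0 hγ0.le) hlam.le) hζ₃.le,
        mul_nonneg (mul_nonneg (mul_nonneg hs0 hγ0.le) hlam.le) hζ₄.le,
        mul_nonneg (by linarith : (0:ℝ) ≤ 1 - s) hζ₅.le]
    nlinarith [mul_le_mul_of_nonneg_left inner hL.le]
end

section
/- Let 0 < μ ≤ L, m ∈ (0,1), φ ∈ [0,1), ρ ∈ [0,1), λ̄ > 0 and q̄ ∈ [0,1) be real numbers. Define κ = (1−√φ)/λ̄, s₁ = 4λ̄²mμ + (1−ρ)²mμ + (6mμ+2L)λ̄(1−ρ), and s₂ = (6mμ+2m²μ+4L)(1−ρ) + 2mμλ̄(2+m). Let γ > 0 and α > 0 satisfy: 4√φ·s₁·γ ≤ κ(1−ρ)²mμ; γ ≤ κL/(mμ); γ ≤ 1; α ≤ (mμ(1−ρ)²/s₂)·(γ/L); and α ≤ (λ̄(1−q̄)/2)·(γ/L). Then with the choices ζ₁ = 1, ζ₂ = 2L/(mμ), ζ₃ = (2λ̄−2ρ+2)/(1−ρ),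 ζ₄ = ζ₅ = (1−ρ)/(2λ̄), all of the following hold: 2√φγλ̄(2ζ₁+ζ₂+2ζ₃+ζ₄+ζ₅) ≤ (1−√φ)ζ₅; γλ̄mμ ≤ (1−√φ)L; α ≤ γ(1−ρ)ζ₁/(L(2ζ₃+mζ₁)); α ≤ γ(1−ρ)ζ₃/(L(2ζ₁+2ζ₂+(2+m)ζ₃)); α ≤ γλ̄/(2L); ζ₁+ζ₄+ζ₅ ≤ (1−ρ)ζ₃/(2λ̄); ζ₅ ≤ ζ₄; ζ₄ ≤ (1−ρ)ζ₁/(2λ̄); and ζ₁ ≤ mμζ₂/(2L). -/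
set_option maxHeartbeats 2000000 in
/-- Parameter verification step in the proof of Theorem 1 of "Compressed
Differentially Private Distributed Optimization with Linear Convergence":
the explicit bounds (12)–(13) on γ and α, together with the concrete choice
ζ₁ = 1, ζ₂ = 2L/(mμ), ζ₃ = (2λ̄−2ρ+2)/(1−ρ), ζ₄ = ζ₅ = (1−ρ)/(2λ̄),
imply the hypotheses (9)–(11) of Lemma 2. -/
theorem stmt_1
    (μ L m φ ρ lam qbar κ s₁ s₂ γ α ζ₁ ζ₂ ζ₃ ζ₄ ζ₅ : ℝ)
    (hμ : 0 < μ) (hμL : μ ≤ L)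
    (hm0 : 0 < m) (hm1 : m < 1)
    (hφ0 : 0 ≤ φ) (hφ1 : φ < 1)
    (hρ0 : 0 ≤ ρ) (hρ1 : ρ < 1)
    (hlam : 0 < lam)
    (hq0 : 0 ≤ qbar) (hq1 : qbar < 1)
    (hκ : κ = (1 - Real.sqrt φ) / lam)
    (hs₁ : s₁ = 4 * lam ^ 2 * m * μ + (1 - ρ) ^ 2 * m * μ
        + (6 * m * μ + 2 * L) * lam * (1 - ρ))
    (hs₂ : s₂ = (6 * m * μ + 2 * m ^ 2 * μ + 4 * L) * (1 - ρ)
        + 2 * m * μ * lam * (2 + m))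
    (hγ0 : 0 < γ) (hα0 : 0 < α)
    (hγa : 4 * Real.sqrt φ * s₁ * γ ≤ κ * (1 - ρ) ^ 2 * m * μ)
    (hγb : γ ≤ κ * L / (m * μ))
    (hγc : γ ≤ 1)
    (hαa : α ≤ m * μ * (1 - ρ) ^ 2 / s₂ * (γ / L))
    (hαb : α ≤ lam * (1 - qbar) / 2 * (γ / L))
    (hζ₁ : ζ₁ = 1) (hζ₂ : ζ₂ = 2 * L / (m * μ))
    (hζ₃ : ζ₃ = (2 * lam - 2 * ρ + 2) / (1 - ρ))
    (hζ₄ : ζ₄ = (1 - ρ) / (2 * lam)) (hζ₅ : ζ₅ = (1 - ρ) / (2 * lam)) :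
    (2 * Real.sqrt φ * γ * lam * (2 * ζ₁ + ζ₂ + 2 * ζ₃ + ζ₄ + ζ₅)
        ≤ (1 - Real.sqrt φ) * ζ₅) ∧
    (γ * lam * m * μ ≤ (1 - Real.sqrt φ) * L) ∧
    (α ≤ γ * (1 - ρ) * ζ₁ / (L * (2 * ζ₃ + m * ζ₁))) ∧
    (α ≤ γ * (1 - ρ) * ζ₃ / (L * (2 * ζ₁ + 2 * ζ₂ + (2 + m) * ζ₃))) ∧
    (α ≤ γ * lam / (2 * L)) ∧
    (ζ₁ + ζ₄ + ζ₅ ≤ (1 - ρ) * ζ₃ / (2 * lam)) ∧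
    (ζ₅ ≤ ζ₄) ∧
    (ζ₄ ≤ (1 - ρ) * ζ₁ / (2 * lam)) ∧
    (ζ₁ ≤ m * μ * ζ₂ / (2 * L)) := by
  have hL : 0 < L := hμ.trans_le hμL
  have hr : 0 < 1 - ρ := by linarith
  set s := Real.sqrt φ with hs
  have hs0 : 0 ≤ s := Real.sqrt_nonneg φ
  have hs1 : s < 1 := by
    rw [hs, show (1:ℝ) = Real.sqrt 1 by simp]
    exact Real.sqrt_lt_sqrt hφ0 hφ1
  have hmμ : 0 < m * μ := mul_pos hm0 hμ
  have hs2pos : 0 < s₂ := by rw [hs₂]; positivity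
  subst hκ hs₁ hs₂ hζ₁ hζ₂ hζ₃ hζ₄ hζ₅
  have hγa' : 4 * s * (4 * lam ^ 2 * m * μ + (1 - ρ) ^ 2 * m * μ
      + (6 * m * μ + 2 * L) * lam * (1 - ρ)) * γ * lam
      ≤ (1 - s) * (1 - ρ) ^ 2 * m * μ := by
    rw [div_mul_eq_mul_div, div_mul_eq_mul_div, div_mul_eq_mul_div,
      le_div_iff₀ hlam] at hγa
    linarith
  have hγb' : γ * lam * (m * μ) ≤ (1 - s) * L := by
    rw [div_mul_eq_mul_div, div_div, le_div_iff₀ (by positivity)] at hγb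
    nlinarith
  refine ⟨?_, ?_, ?_, ?_, ?_, ?_, le_refl _, ?_, ?_⟩
  · -- G1
    have hS : 2 * 1 + 2 * L / (m * μ) + 2 * ((2 * lam - 2 * ρ + 2) / (1 - ρ))
        + (1 - ρ) / (2 * lam) + (1 - ρ) / (2 * lam)
        = (4 * lam ^ 2 * m * μ + (1 - ρ) ^ 2 * m * μ
          + (6 * m * μ + 2 * L) * lam * (1 - ρ)) / ((1 - ρ) * (m * μ) * lam) := by
      field_simp
      ring
    rw [hS]
    rw [show 2 * s * γ * lam * ((4 * lam ^ 2 * m * μ + (1 - ρ) ^ 2 * m * μ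
          + (6 * m * μ + 2 * L) * lam * (1 - ρ)) / ((1 - ρ) * (m * μ) * lam))
        = (2 * s * γ * lam * (4 * lam ^ 2 * m * μ + (1 - ρ) ^ 2 * m * μ
          + (6 * m * μ + 2 * L) * lam * (1 - ρ))) / ((1 - ρ) * (m * μ) * lam) by
        ring,
      show (1 - s) * ((1 - ρ) / (2 * lam)) = ((1 - s) * (1 - ρ)) / (2 * lam) by ring,
      div_le_div_iff₀ (by positivity) (by positivity)]
    nlinarith [mul_le_mul_of_nonneg_right hγa' hlam.le]
  · -- G2
    linarith [hγb']
  · -- G3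
    have hden : L * (2 * ((2 * lam - 2 * ρ + 2) / (1 - ρ)) + m * 1)
        = L * (2 * (2 * lam - 2 * ρ + 2) + m * (1 - ρ)) / (1 - ρ) := by
      field_simp
    rw [hden, div_div_eq_mul_div]
    refine hαa.trans ?_
    have h3 : (0:ℝ) ≤ γ * L * (1 - ρ) ^ 2 *
        ((2 * m + m ^ 2) * μ * (1 - ρ) + 4 * L * (1 - ρ) + 2 * m ^ 2 * μ * lam) := by
      have hin : (0:ℝ) ≤ (2 * m + m ^ 2) * μ * (1 - ρ) + 4 * L * (1 - ρ)
          + 2 * m ^ 2 * μ * lam := by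
        have h1 : (0:ℝ) ≤ (2 * m + m ^ 2) * μ * (1 - ρ) := by positivity
        have h2 : (0:ℝ) ≤ 4 * L * (1 - ρ) := by positivity
        have h3 : (0:ℝ) ≤ 2 * m ^ 2 * μ * lam := by positivity
        linarith
      positivity
    rw [div_mul_div_comm, div_le_div_iff₀ (mul_pos hs2pos hL)
      (mul_pos hL (by nlinarith : (0:ℝ) < 2 * (2 * lam - 2 * ρ + 2) + m * (1 - ρ)))]
    nlinarith [h3]
  · -- G4
    have hden : L * (2 * 1 + 2 * (2 * L / (m * μ)) + (2 + m) * ((2 * lam - 2 * ρ + 2) / (1 - ρ)))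
        = L * (2 * (m * μ) * (1 - ρ) + 4 * L * (1 - ρ)
          + (2 + m) * (2 * lam - 2 * ρ + 2) * (m * μ)) / ((m * μ) * (1 - ρ)) := by
      field_simp
      ring
    have hnum : γ * (1 - ρ) * ((2 * lam - 2 * ρ + 2) / (1 - ρ)) = γ * (2 * lam - 2 * ρ + 2) := by
      field_simp
    rw [hden, hnum, div_div_eq_mul_div]
    refine hαa.trans ?_
    have hin : (0:ℝ) ≤ (4 * L + 6 * m * μ + 2 * m ^ 2 * μ) * (1 - ρ) ^ 2
        + (8 * L + 16 * m * μ + 6 * m ^ 2 * μ) * (lam * (1 - ρ))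
        + (8 * m * μ + 4 * m ^ 2 * μ) * lam ^ 2 := by
      have h1 : (0:ℝ) ≤ (4 * L + 6 * m * μ + 2 * m ^ 2 * μ) * (1 - ρ) ^ 2 := by positivity
      have h2 : (0:ℝ) ≤ (8 * L + 16 * m * μ + 6 * m ^ 2 * μ) * (lam * (1 - ρ)) :=
        mul_nonneg (by positivity) (mul_pos hlam hr).le
      have h3 : (0:ℝ) ≤ (8 * m * μ + 4 * m ^ 2 * μ) * lam ^ 2 := by positivity
      linarith
    have h4 : (0:ℝ) ≤ γ * L * (μ * m) * (1 - ρ) *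
        ((4 * L + 6 * m * μ + 2 * m ^ 2 * μ) * (1 - ρ) ^ 2
        + (8 * L + 16 * m * μ + 6 * m ^ 2 * μ) * (lam * (1 - ρ))
        + (8 * m * μ + 4 * m ^ 2 * μ) * lam ^ 2) :=
      mul_nonneg (by positivity) hin
    have hposden : (0:ℝ) < L * (2 * (m * μ) * (1 - ρ) + 4 * L * (1 - ρ)
        + (2 + m) * (2 * lam - 2 * ρ + 2) * (m * μ)) := by
      apply mul_pos hL
      have h1 : (0:ℝ) < 2 * (m * μ) * (1 - ρ) := by positivity
      have h2 : (0:ℝ) < 4 * L * (1 - ρ) := by positivity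
      have h3 : (0:ℝ) < (2 + m) * (2 * lam - 2 * ρ + 2) * (m * μ) := by
        apply mul_pos (mul_pos (by linarith) (by linarith)) hmμ
      linarith
    rw [div_mul_div_comm, div_le_div_iff₀ (mul_pos hs2pos hL) hposden]
    nlinarith [h4]
  · -- G5
    refine hαb.trans ?_
    rw [div_mul_div_comm, div_le_div_iff₀ (by positivity) (by positivity)]
    nlinarith [mul_nonneg (mul_nonneg (mul_nonneg hγ0.le hlam.le) hL.le) hq0]
  · -- G6
    have h1 : (1 - ρ) * ((2 * lam - 2 * ρ + 2) / (1 - ρ)) = 2 * lam - 2 * ρ + 2 := by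
      field_simp
    have h2 : (2 * lam - 2 * ρ + 2) / (2 * lam)
        = 1 + (1 - ρ) / (2 * lam) + (1 - ρ) / (2 * lam) := by
      field_simp
      ring
    rw [h1, h2]
  · -- G8
    rw [mul_one]
  · -- G9
    have : m * μ * (2 * L / (m * μ)) = 2 * L := by field_simp
    rw [this, div_self (by positivity)]
end

section
/- Let G be an s×s real matrix with nonnegative entries, ζ ∈ ℝˢ a vector with all entries strictly positive, and h, q real numbers with 0 ≤ q < h < 1 such that G·ζ ≤ h·ζ componentwise. Let Θ : ℕ → ℝˢ be a sequence of componentwise-nonnegative vectors and ϑ ∈ ℝˢ a componentwise-nonnegative vector such that Θ(k+1) ≤ G·Θ(k) + qᵏ·ϑ componentwise for every k ∈ ℕ. If c ≥ 0 and e ≥ 0 are real numbers with Θ(0) ≤ c·ζ and ϑ ≤ e·ζ componentwise, then for every k ∈ ℕ it holds componentwise that Θ(k) ≤ (c + e/(h−q))·hᵏ·ζ. -/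
/-- The linear-system-of-inequalities mechanism behind Theorem 1 of "Compressed
Differentially Private Distributed Optimization with Linear Convergence":
if G is entrywise nonnegative, ζ is entrywise positive with G·ζ ≤ h·ζ
componentwise, 0 ≤ q < h < 1, and the nonnegative vectors Θ(k) satisfy
Θ(k+1) ≤ G·Θ(k) + qᵏ·ϑ componentwise with Θ(0) ≤ c·ζ and ϑ ≤ e·ζ, then
Θ(k) ≤ (c + e/(h−q))·hᵏ·ζ componentwise for every k. -/
theorem stmt_2 {s : ℕ}
    (G : Matrix (Fin s) (Fin s) ℝ) (ζ : Fin s → ℝ) (h q : ℝ)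
    (hG : ∀ i j, 0 ≤ G i j)
    (hζ : ∀ i, 0 < ζ i)
    (hq0 : 0 ≤ q) (hqh : q < h) (hh1 : h < 1)
    (hGζ : ∀ i, G.mulVec ζ i ≤ h * ζ i)
    (Θ : ℕ → Fin s → ℝ) (ϑ : Fin s → ℝ)
    (hΘnonneg : ∀ k i, 0 ≤ Θ k i)
    (hϑnonneg : ∀ i, 0 ≤ ϑ i)
    (hrec : ∀ k i, Θ (k + 1) i ≤ G.mulVec (Θ k) i + q ^ k * ϑ i)
    (c e : ℝ) (hc : 0 ≤ c) (he : 0 ≤ e)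
    (hΘ0 : ∀ i, Θ 0 i ≤ c * ζ i)
    (hϑ : ∀ i, ϑ i ≤ e * ζ i) :
    ∀ k i, Θ k i ≤ (c + e / (h - q)) * h ^ k * ζ i := by
  have hhq : 0 < h - q := by linarith
  have hh0 : 0 < h := lt_of_le_of_lt hq0 hqh
  set A : ℕ → ℝ := fun k => c * h ^ k + e * (h ^ k - q ^ k) / (h - q) with hA
  have hAnn : ∀ k, 0 ≤ A k := by
    intro k
    have hpow : q ^ k ≤ h ^ k := pow_le_pow_left₀ hq0 hqh.le k
    have h1 : 0 ≤ e * (h ^ k - q ^ k) / (h - q) := by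
      apply div_nonneg _ hhq.le
      nlinarith
    have h2 : 0 ≤ c * h ^ k := by positivity
    simp only [hA]
    linarith
  have key : ∀ k i, Θ k i ≤ A k * ζ i := by
    intro k
    induction k with
    | zero =>
        intro i
        simpa [hA] using hΘ0 i
    | succ n ih =>
        intro i
        have h1 : G.mulVec (Θ n) i ≤ A n * G.mulVec ζ i := by
          simp only [Matrix.mulVec, dotProduct, Finset.mul_sum]
          apply Finset.sum_le_sum
          intro j _
          have := ih j
          calc G i j * Θ n j ≤ G i j * (A n * ζ j) :=
                mul_le_mul_of_nonneg_left this (hG i j)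
            _ = A n * (G i j * ζ j) := by ring
        have h2 : A n * G.mulVec ζ i ≤ A n * (h * ζ i) :=
          mul_le_mul_of_nonneg_left (hGζ i) (hAnn n)
        have h3 : q ^ n * ϑ i ≤ q ^ n * (e * ζ i) :=
          mul_le_mul_of_nonneg_left (hϑ i) (pow_nonneg hq0 n)
        have h4 : Θ (n + 1) i ≤ A n * (h * ζ i) + q ^ n * (e * ζ i) :=
          (hrec n i).trans (by linarith)
        have heq : A n * (h * ζ i) + q ^ n * (e * ζ i) = A (n + 1) * ζ i := by
          simp only [hA, pow_succ]
          field_simp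
          ring
        linarith [h4, heq.le]
  intro k i
  have hle : A k ≤ (c + e / (h - q)) * h ^ k := by
    have hpow : 0 ≤ q ^ k := pow_nonneg hq0 k
    simp only [hA]
    have h5 : e * (h ^ k - q ^ k) / (h - q) ≤ e * h ^ k / (h - q) := by
      gcongr
      nlinarith
    calc c * h ^ k + e * (h ^ k - q ^ k) / (h - q)
        ≤ c * h ^ k + e * h ^ k / (h - q) := by linarith [h5]
      _ = (c + e / (h - q)) * h ^ k := by ring
  calc Θ k i ≤ A k * ζ i := key k i
    _ ≤ (c + e / (h - q)) * h ^ k * ζ i :=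
        mul_le_mul_of_nonneg_right hle (hζ i).le
end

section
/- Let d ≥ 1 and let f : ℝᵈ → ℝ be a differentiable function that is μ-strongly convex and has L-Lipschitz gradient, where 0 < μ ≤ L. Let α be a real number with 0 < α ≤ 1/(μ+L). Then for all x, y ∈ ℝᵈ: ‖x − y − α(∇f(x) − ∇f(y))‖ ≤ (1−αμ)·‖x − y‖. -/
open scoped RealInnerProductSpace

-- derivative of f along a line
lemma lineDerivAux5 {d : ℕ} (f : EuclideanSpace ℝ (Fin d) → ℝ) (hf : Differentiable ℝ f)
    (x v : EuclideanSpace ℝ (Fin d)) (t : ℝ) :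
    HasDerivAt (fun s : ℝ => f (x + s • v)) ⟪gradient f (x + t • v), v⟫ t := by
  have hline : HasDerivAt (fun s : ℝ => x + s • v) v t := by
    simpa using ((hasDerivAt_id t).smul_const v).const_add x
  have := ((hf (x + t • v)).hasGradientAt.hasFDerivAt).comp_hasDerivAt t hline
  simpa [InnerProductSpace.toDual_apply_apply, Function.comp_def] using this

-- descent lemma
lemma descentAux5 {d : ℕ} (f : EuclideanSpace ℝ (Fin d) → ℝ) (L : ℝ) (hL : 0 ≤ L)
    (hf : Differentiable ℝ f)
    (hlip : ∀ x y : EuclideanSpace ℝ (Fin d), ‖gradient f x - gradient f y‖ ≤ L * ‖x - y‖)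
    (x y : EuclideanSpace ℝ (Fin d)) :
    f y ≤ f x + ⟪gradient f x, y - x⟫ + L / 2 * ‖y - x‖ ^ 2 := by
  set v := y - x with hv
  set F : ℝ → ℝ := fun t => t * ⟪gradient f x, v⟫ + L / 2 * t ^ 2 * ‖v‖ ^ 2 - f (x + t • v)
    with hF
  have hder : ∀ t : ℝ, HasDerivAt F
      (⟪gradient f x, v⟫ + L / 2 * (2 * t) * ‖v‖ ^ 2 - ⟪gradient f (x + t • v), v⟫) t := by
    intro t
    have h1 : HasDerivAt (fun t : ℝ => t * ⟪gradient f x, v⟫) ⟪gradient f x, v⟫ t := by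
      simpa using (hasDerivAt_id t).mul_const _
    have h2 : HasDerivAt (fun t : ℝ => L / 2 * t ^ 2 * ‖v‖ ^ 2)
        (L / 2 * (2 * t) * ‖v‖ ^ 2) t := by
      have := ((hasDerivAt_pow 2 t).const_mul (L / 2)).mul_const (‖v‖ ^ 2)
      simpa [mul_comm, mul_assoc, mul_left_comm] using this
    exact ((h1.add h2).sub (lineDerivAux5 f hf x v t))
  have hmono : MonotoneOn F (Set.Icc (0:ℝ) 1) := by
    apply monotoneOn_of_deriv_nonneg (convex_Icc 0 1)
    · exact fun t _ => ((hder t).continuousAt).continuousWithinAt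
    · exact fun t _ => ((hder t).differentiableAt).differentiableWithinAt
    · intro t ht
      rw [(hder t).deriv]
      rw [interior_Icc] at ht
      have hkey : ⟪gradient f (x + t • v) - gradient f x, v⟫ ≤ L * t * ‖v‖ ^ 2 := by
        calc ⟪gradient f (x + t • v) - gradient f x, v⟫
            ≤ ‖gradient f (x + t • v) - gradient f x‖ * ‖v‖ := real_inner_le_norm _ _
          _ ≤ (L * ‖(x + t • v) - x‖) * ‖v‖ := by
              exact mul_le_mul_of_nonneg_right (hlip _ _) (norm_nonneg _)
          _ = L * t * ‖v‖ ^ 2 := by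
              rw [add_sub_cancel_left, norm_smul]
              simp [abs_of_nonneg ht.1.le]
              ring
      rw [inner_sub_left] at hkey
      linarith
  have := hmono (Set.mem_Icc.2 ⟨le_refl 0, zero_le_one⟩) (Set.mem_Icc.2 ⟨zero_le_one, le_refl 1⟩)
    zero_le_one
  simp only [hF] at this
  simp only [zero_smul, add_zero, one_smul, one_pow, one_mul] at this
  have hxy : x + v = y := by rw [hv]; abel
  rw [hxy] at this
  nlinarith [this]

-- cocoercivity for convex functions with quadratic upper bound
lemma cocoAux5 {E : Type*} [NormedAddCommGroup E] [InnerProductSpace ℝ E]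
    (h : E → ℝ) (gh : E → E) (c : ℝ) (hc : 0 < c)
    (hconv : ∀ a b : E, h a + ⟪gh a, b - a⟫ ≤ h b)
    (hdesc : ∀ a b : E, h b ≤ h a + ⟪gh a, b - a⟫ + c / 2 * ‖b - a‖ ^ 2) :
    ∀ x y : E, (1 / c) * ‖gh x - gh y‖ ^ 2 ≤ ⟪gh x - gh y, x - y⟫ := by
  have hcc : c * (1 / c) = 1 := mul_one_div_cancel hc.ne'
  have hone : ∀ x y : E,
      h x + ⟪gh x, y - x⟫ + (1 / (2 * c)) * ‖gh y - gh x‖ ^ 2 ≤ h y := by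
    intro x y
    set w := gh y - gh x with hw
    set z := y - (1 / c) • w with hz
    have h1 := hconv x z
    have h2 := hdesc y z
    have ezy : z - y = -((1 / c) • w) := by rw [hz]; abel
    have e2 : ⟪gh y, z - y⟫ = -((1 / c) * ⟪gh y, w⟫) := by
      rw [ezy, inner_neg_right, real_inner_smul_right]
    have e3 : ‖z - y‖ ^ 2 = (1 / c) ^ 2 * ‖w‖ ^ 2 := by
      rw [ezy, norm_neg, norm_smul]
      simp [abs_of_pos (by positivity : (0:ℝ) < 1 / c), mul_pow]
    have e1 : ⟪gh x, z - x⟫ = ⟪gh x, y - x⟫ - (1 / c) * ⟪gh x, w⟫ := by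
      have : z - x = (y - x) - (1 / c) • w := by rw [hz]; abel
      rw [this, inner_sub_right, real_inner_smul_right]
    have e4 : ⟪gh y, w⟫ - ⟪gh x, w⟫ = ‖w‖ ^ 2 := by
      rw [← inner_sub_left, ← hw, real_inner_self_eq_norm_sq]
    rw [e1] at h1
    rw [e2, e3] at h2
    have key : c / 2 * ((1 / c) ^ 2 * ‖w‖ ^ 2) = 1 / (2 * c) * ‖w‖ ^ 2 := by
      field_simp
    rw [key] at h2
    have e4' : (1 / c) * ⟪gh y, w⟫ - (1 / c) * ⟪gh x, w⟫ = (1 / c) * ‖w‖ ^ 2 := by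
      rw [← mul_sub, e4]
    have eC : (1 / c) * ‖w‖ ^ 2 = 2 * (1 / (2 * c) * ‖w‖ ^ 2) := by
      field_simp
    linarith [h1, h2, e4', eC.le, eC.ge]
  intro x y
  have hA := hone x y
  have hB := hone y x
  have en : ‖gh y - gh x‖ = ‖gh x - gh y‖ := norm_sub_rev _ _
  have e5 : ⟪gh x, y - x⟫ = -⟪gh x, x - y⟫ := by rw [← inner_neg_right, neg_sub]
  have e6 : ⟪gh y, x - y⟫ = ⟪gh y, x - y⟫ := rfl
  have e7 : ⟪gh x - gh y, x - y⟫ = ⟪gh x, x - y⟫ - ⟪gh y, x - y⟫ := inner_sub_left _ _ _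
  have hc' : (1 : ℝ) / c = 2 * (1 / (2 * c)) := by field_simp
  rw [en] at hA
  rw [e5] at hA
  rw [e7, hc']
  linarith [hA, hB]

set_option maxHeartbeats 2000000 in
/-- Single-function gradient-step contraction (core of Lemma 4 of "Compressed
Differentially Private Distributed Optimization with Linear Convergence"):
if f : ℝᵈ → ℝ is differentiable, μ-strongly convex, with L-Lipschitz gradient,
0 < μ ≤ L, and 0 < α ≤ 1/(μ+L), then
‖x − y − α(∇f(x) − ∇f(y))‖ ≤ (1−αμ)‖x − y‖. -/
theorem stmt_5 {d : ℕ} (hd : 1 ≤ d)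
    (f : EuclideanSpace ℝ (Fin d) → ℝ) (μ L α : ℝ)
    (hμ : 0 < μ) (hμL : μ ≤ L)
    (hf : Differentiable ℝ f)
    (hsc : ∀ x y : EuclideanSpace ℝ (Fin d),
      f y ≥ f x + ⟪gradient f x, y - x⟫ + μ / 2 * ‖x - y‖ ^ 2)
    (hlip : ∀ x y : EuclideanSpace ℝ (Fin d),
      ‖gradient f x - gradient f y‖ ≤ L * ‖x - y‖)
    (hα0 : 0 < α) (hα : α ≤ 1 / (μ + L)) :
    ∀ x y : EuclideanSpace ℝ (Fin d),
      ‖x - y - α • (gradient f x - gradient f y)‖ ≤ (1 - α * μ) * ‖x - y‖ := by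
  have hL : 0 < L := lt_of_lt_of_le hμ hμL
  have hμL2 : 0 < μ + L := by linarith
  have hαμL : α * (μ + L) ≤ 1 := by
    rw [div_eq_mul_inv, one_mul] at hα
    calc α * (μ + L) ≤ (μ + L)⁻¹ * (μ + L) := by
          exact mul_le_mul_of_nonneg_right hα hμL2.le
      _ = 1 := inv_mul_cancel₀ hμL2.ne'
  have h1αμ : 0 ≤ 1 - α * μ := by nlinarith
  -- strong monotonicity
  have smono : ∀ x y : EuclideanSpace ℝ (Fin d),
      μ * ‖x - y‖ ^ 2 ≤ ⟪gradient f x - gradient f y, x - y⟫ := by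
    intro x y
    have h1 := hsc x y
    have h2 := hsc y x
    have e1 : ⟪gradient f x, y - x⟫ = -⟪gradient f x, x - y⟫ := by
      rw [← inner_neg_right, neg_sub]
    have e2 : ‖y - x‖ = ‖x - y‖ := norm_sub_rev _ _
    rw [e1] at h1
    rw [e2] at h2
    rw [inner_sub_left]
    linarith
  -- key coercivity inequality
  have key : ∀ x y : EuclideanSpace ℝ (Fin d),
      μ * L * ‖x - y‖ ^ 2 + ‖gradient f x - gradient f y‖ ^ 2
        ≤ (μ + L) * ⟪gradient f x - gradient f y, x - y⟫ := by
    intro x y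
    rcases eq_or_lt_of_le hμL with hEq | hLt
    · -- μ = L
      have hn : ‖gradient f x - gradient f y‖ ^ 2 ≤ L ^ 2 * ‖x - y‖ ^ 2 := by
        have := hlip x y
        nlinarith [norm_nonneg (gradient f x - gradient f y), norm_nonneg (x - y)]
      have := smono x y
      rw [← hEq] at hn ⊢
      nlinarith
    · -- μ < L
      set h : EuclideanSpace ℝ (Fin d) → ℝ := fun z => f z - μ / 2 * ‖z‖ ^ 2 with hh
      set gh : EuclideanSpace ℝ (Fin d) → EuclideanSpace ℝ (Fin d) :=
        fun z => gradient f z - μ • z with hgh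
      have hconv : ∀ a b : EuclideanSpace ℝ (Fin d), h a + ⟪gh a, b - a⟫ ≤ h b := by
        intro a b
        have h1 := hsc a b
        have e1 : ⟪gh a, b - a⟫ = ⟪gradient f a, b - a⟫ - μ * ⟪a, b - a⟫ := by
          rw [hgh]; rw [inner_sub_left, real_inner_smul_left]
        have e2 : ⟪a, b - a⟫ = ⟪a, b⟫ - ‖a‖ ^ 2 := by
          rw [inner_sub_right, real_inner_self_eq_norm_sq]
        have e3 : ‖a - b‖ ^ 2 = ‖a‖ ^ 2 - 2 * ⟪a, b⟫ + ‖b‖ ^ 2 := norm_sub_sq_real a b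
        rw [hh]
        simp only []
        rw [e1, e2]
        nlinarith [h1, e3]
      have hdesc : ∀ a b : EuclideanSpace ℝ (Fin d),
          h b ≤ h a + ⟪gh a, b - a⟫ + (L - μ) / 2 * ‖b - a‖ ^ 2 := by
        intro a b
        have h1 := descentAux5 f L hL.le hf hlip a b
        have e1 : ⟪gh a, b - a⟫ = ⟪gradient f a, b - a⟫ - μ * ⟪a, b - a⟫ := by
          rw [hgh]; rw [inner_sub_left, real_inner_smul_left]
        have e2 : ⟪a, b - a⟫ = ⟪a, b⟫ - ‖a‖ ^ 2 := by
          rw [inner_sub_right, real_inner_self_eq_norm_sq]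
        have e3 : ‖b - a‖ ^ 2 = ‖b‖ ^ 2 - 2 * ⟪b, a⟫ + ‖a‖ ^ 2 := norm_sub_sq_real b a
        have e4 : ⟪b, a⟫ = ⟪a, b⟫ := real_inner_comm a b
        rw [hh]
        simp only []
        rw [e1, e2]
        nlinarith [h1, e3, e4]
      have coco := cocoAux5 h gh (L - μ) (by linarith) hconv hdesc x y
      have egh : gh x - gh y = (gradient f x - gradient f y) - μ • (x - y) := by
        rw [hgh]; simp only []; rw [smul_sub]; abel
      rw [egh] at coco
      set G := gradient f x - gradient f y with hG
      set v := x - y with hv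
      have e5 : ⟪G - μ • v, v⟫ = ⟪G, v⟫ - μ * ‖v‖ ^ 2 := by
        rw [inner_sub_left, real_inner_smul_left, real_inner_self_eq_norm_sq]
      have e6 : ‖G - μ • v‖ ^ 2 = ‖G‖ ^ 2 - 2 * (μ * ⟪G, v⟫) + μ ^ 2 * ‖v‖ ^ 2 := by
        rw [norm_sub_sq_real, real_inner_smul_right, norm_smul]
        simp [abs_of_pos hμ, mul_pow]
      rw [e5, e6] at coco
      have hc : 0 < L - μ := by linarith
      have coco' : ‖G‖ ^ 2 - 2 * (μ * ⟪G, v⟫) + μ ^ 2 * ‖v‖ ^ 2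
          ≤ (L - μ) * (⟪G, v⟫ - μ * ‖v‖ ^ 2) := by
        have h2 := mul_le_mul_of_nonneg_left coco hc.le
        have hcc : (L - μ) * (1 / (L - μ)) = 1 := mul_one_div_cancel hc.ne'
        rw [← mul_assoc, hcc, one_mul] at h2
        exact h2
      linarith [coco']
  -- final computation
  intro x y
  set G := gradient f x - gradient f y with hG
  set v := x - y with hv
  have hcau : ⟪G, v⟫ ≤ ‖G‖ * ‖v‖ := real_inner_le_norm G v
  have hsm := smono x y
  have hk := key x y
  rw [← hG, ← hv] at hsm hk
  have hN2 : μ ^ 2 * ‖v‖ ^ 2 ≤ ‖G‖ ^ 2 := by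
    rcases eq_or_lt_of_le (norm_nonneg v) with h0 | h0
    · rw [← h0]; simp
    · have h1 : μ * ‖v‖ ^ 2 ≤ ‖G‖ * ‖v‖ := le_trans hsm hcau
      have h2 : μ * ‖v‖ ≤ ‖G‖ := by
        have := (mul_le_mul_iff_of_pos_right h0).mp (by nlinarith [h1] : μ * ‖v‖ * ‖v‖ ≤ ‖G‖ * ‖v‖)
        exact this
      have h3 : (μ * ‖v‖) * (μ * ‖v‖) ≤ ‖G‖ * ‖G‖ :=
        mul_le_mul h2 h2 (by positivity) (norm_nonneg G)
      nlinarith [h3]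
  have hsq : ‖v - α • G‖ ^ 2 = ‖v‖ ^ 2 - 2 * (α * ⟪G, v⟫) + α ^ 2 * ‖G‖ ^ 2 := by
    rw [norm_sub_sq_real, real_inner_smul_right, norm_smul, real_inner_comm]
    simp [abs_of_pos hα0, mul_pow]
  have main : ‖v - α • G‖ ^ 2 ≤ ((1 - α * μ) * ‖v‖) ^ 2 := by
    rw [hsq]
    have hcoef : 0 ≤ 2 * α - α ^ 2 * (μ + L) := by nlinarith
    nlinarith [hk, hN2, mul_nonneg hcoef (sub_nonneg.mpr hN2), hα0.le, sq_nonneg ‖v‖]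
  calc ‖v - α • G‖ = √(‖v - α • G‖ ^ 2) := by rw [Real.sqrt_sq (norm_nonneg _)]
    _ ≤ √(((1 - α * μ) * ‖v‖) ^ 2) := Real.sqrt_le_sqrt main
    _ = (1 - α * μ) * ‖v‖ := Real.sqrt_sq (by positivity)
end

section
/- Let n ≥ 1 and d ≥ 1 be natural numbers and let W be a symmetric doubly stochastic n×n real matrix. Let J denote the n×n all-ones matrix and let ρ be the ℓ₂ operator norm of W − (1/n)J. Let γ ∈ (0,1] and define W_γ = (1−γ)I + γW. Then for every n×d real matrix ω, writing ω̄ = (1/n)·J·ω, one has ‖W_γ·ω − ω̄‖_F ≤ (1 − γ(1−ρ))·‖ω − ω̄‖_F, where ‖·‖_F is the Frobenius norm. -/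
/-- The ℓ₂ operator norm of a real n×n matrix, i.e. the operator norm of the
induced linear map on Euclidean space. -/
noncomputable def l2OpNorm {n : ℕ} (M : Matrix (Fin n) (Fin n) ℝ) : ℝ :=
  ‖LinearMap.toContinuousLinearMap (Matrix.toEuclideanLin M)‖

/-- The Frobenius norm of a real matrix. -/
noncomputable def frobNorm {n d : ℕ} (A : Matrix (Fin n) (Fin d) ℝ) : ℝ :=
  Real.sqrt (∑ i, ∑ j, (A i j) ^ 2)

attribute [local instance] Matrix.frobeniusSeminormedAddCommGroup
attribute [local instance] Matrix.frobeniusNormedSpace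

lemma frobNorm_eq_norm {n d : ℕ} (A : Matrix (Fin n) (Fin d) ℝ) :
    frobNorm A = ‖A‖ := by
  rw [Matrix.frobenius_norm_def, frobNorm, Real.sqrt_eq_rpow]
  congr 1
  refine Finset.sum_congr rfl fun i _ => Finset.sum_congr rfl fun j _ => ?_
  rw [Real.norm_eq_abs, Real.rpow_two, sq_abs]

lemma frobNorm_nonneg {n d : ℕ} (A : Matrix (Fin n) (Fin d) ℝ) : 0 ≤ frobNorm A :=
  Real.sqrt_nonneg _

lemma euclid_norm_sq {n : ℕ} (v : EuclideanSpace ℝ (Fin n)) :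
    ‖v‖ ^ 2 = ∑ i, (v i) ^ 2 := by
  rw [EuclideanSpace.norm_eq, Real.sq_sqrt]
  · exact Finset.sum_congr rfl fun i _ => by rw [Real.norm_eq_abs, sq_abs]
  · exact Finset.sum_nonneg fun i _ => sq_nonneg _

/-- Column-wise bound: Frobenius norm of a product is bounded by op-norm times Frobenius. -/
lemma frob_mul_le {n d : ℕ} (M : Matrix (Fin n) (Fin n) ℝ) (A : Matrix (Fin n) (Fin d) ℝ) :
    frobNorm (M * A) ≤ l2OpNorm M * frobNorm A := by
  set T := LinearMap.toContinuousLinearMap (Matrix.toEuclideanLin M) with hT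
  have hcol : ∀ j : Fin d, ∑ i, ((M * A) i j) ^ 2 ≤ ‖T‖ ^ 2 * ∑ i, (A i j) ^ 2 := by
    intro j
    set v : EuclideanSpace ℝ (Fin n) := (WithLp.equiv 2 _).symm (fun i => A i j) with hv
    have hTv : (T v : EuclideanSpace ℝ (Fin n))
        = (WithLp.equiv 2 (Fin n → ℝ)).symm (M.mulVec fun i => A i j) := by
      show Matrix.toEuclideanLin M v = _
      rw [Matrix.toEuclideanLin_apply]
      rfl
    have h1 : ‖T v‖ ≤ ‖T‖ * ‖v‖ := T.le_opNorm v
    have h2 : ‖T v‖ ^ 2 ≤ (‖T‖ * ‖v‖) ^ 2 := by nlinarith [norm_nonneg (T v)]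
    have h3 : ‖T v‖ ^ 2 = ∑ i, ((M * A) i j) ^ 2 := by
      rw [euclid_norm_sq, hTv]
      refine Finset.sum_congr rfl fun i _ => ?_
      simp [Matrix.mulVec, Matrix.mul_apply, dotProduct]
    have h4 : ‖v‖ ^ 2 = ∑ i, (A i j) ^ 2 := by rw [euclid_norm_sq]; rfl
    calc ∑ i, ((M * A) i j) ^ 2 = ‖T v‖ ^ 2 := h3.symm
      _ ≤ (‖T‖ * ‖v‖) ^ 2 := h2
      _ = ‖T‖ ^ 2 * ∑ i, (A i j) ^ 2 := by rw [mul_pow, h4]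
  have key : ∑ i, ∑ j, ((M * A) i j) ^ 2 ≤ ‖T‖ ^ 2 * ∑ i, ∑ j, (A i j) ^ 2 := by
    rw [Finset.sum_comm,
      show (∑ i, ∑ j, (A i j) ^ 2) = ∑ j, ∑ i, (A i j) ^ 2 from Finset.sum_comm,
      Finset.mul_sum]
    exact Finset.sum_le_sum fun j _ => hcol j
  rw [frobNorm, frobNorm, l2OpNorm, ← hT]
  calc Real.sqrt (∑ i, ∑ j, ((M * A) i j) ^ 2)
      ≤ Real.sqrt (‖T‖ ^ 2 * ∑ i, ∑ j, (A i j) ^ 2) := Real.sqrt_le_sqrt key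
    _ = ‖T‖ * Real.sqrt (∑ i, ∑ j, (A i j) ^ 2) := by
        rw [Real.sqrt_mul (sq_nonneg _), Real.sqrt_sq (norm_nonneg _)]

/-- Criterion for bounding the ℓ₂ operator norm. -/
lemma l2OpNorm_le_of_sq {n : ℕ} (M : Matrix (Fin n) (Fin n) ℝ) {c : ℝ} (hc : 0 ≤ c)
    (h : ∀ v : Fin n → ℝ, ∑ i, (M.mulVec v i) ^ 2 ≤ c ^ 2 * ∑ i, (v i) ^ 2) :
    l2OpNorm M ≤ c := by
  refine ContinuousLinearMap.opNorm_le_bound _ hc fun x => ?_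
  have e1 : ‖LinearMap.toContinuousLinearMap (Matrix.toEuclideanLin M) x‖ ^ 2
      = ∑ i, (M.mulVec (fun i => x i) i) ^ 2 := by
    rw [show (LinearMap.toContinuousLinearMap (Matrix.toEuclideanLin M) x :
          EuclideanSpace ℝ (Fin n)) = Matrix.toEuclideanLin M x from rfl,
      Matrix.toEuclideanLin_apply, euclid_norm_sq]
  have e2 : ‖x‖ ^ 2 = ∑ i, (x i) ^ 2 := euclid_norm_sq x
  have h1 : ‖LinearMap.toContinuousLinearMap (Matrix.toEuclideanLin M) x‖ ^ 2
      ≤ (c * ‖x‖) ^ 2 := by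
    rw [e1, mul_pow, e2]; exact h _
  have h2 : 0 ≤ c * ‖x‖ := mul_nonneg hc (norm_nonneg _)
  nlinarith [norm_nonneg (LinearMap.toContinuousLinearMap (Matrix.toEuclideanLin M) x)]

lemma sum_sub_const_sq {n : ℕ} (v : Fin n → ℝ) (c : ℝ) :
    ∑ i, (v i - c) ^ 2 = (∑ i, (v i) ^ 2) - 2 * c * (∑ i, v i) + (n : ℝ) * c ^ 2 := by
  have h : ∀ i : Fin n, (v i - c) ^ 2 = (v i) ^ 2 - 2 * c * v i + c ^ 2 := fun i => by ring
  simp only [h]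
  rw [Finset.sum_add_distrib, Finset.sum_sub_distrib, ← Finset.mul_sum, Finset.sum_const,
    Finset.card_univ, Fintype.card_fin, nsmul_eq_mul]

lemma l2OpNorm_nonneg' {n : ℕ} (M : Matrix (Fin n) (Fin n) ℝ) : 0 ≤ l2OpNorm M :=
  norm_nonneg _

/-- Lemma 5 (Appendix A.1) of "Compressed Differentially Private Distributed
Optimization with Linear Convergence": for a symmetric doubly stochastic W,
γ ∈ (0,1] and W_γ = (1−γ)I + γW, the lazy averaging matrix contracts toward
the row-average: ‖W_γω − ω̄‖_F ≤ (1−γ(1−ρ))‖ω − ω̄‖_F, where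
ρ = ‖W − (1/n)𝟙𝟙ᵀ‖₂ and ω̄ = (1/n)𝟙𝟙ᵀω. -/
theorem stmt_6 {n d : ℕ} (hn : 1 ≤ n) (hd : 1 ≤ d)
    (W : Matrix (Fin n) (Fin n) ℝ)
    (hWsymm : W.IsSymm)
    (hWnonneg : ∀ i j, 0 ≤ W i j)
    (hWrow : ∀ i, ∑ j, W i j = 1)
    (hWcol : ∀ j, ∑ i, W i j = 1)
    (J : Matrix (Fin n) (Fin n) ℝ) (hJ : J = Matrix.of fun _ _ => (1 : ℝ))
    (ρ : ℝ) (hρ : ρ = l2OpNorm (W - ((n : ℝ))⁻¹ • J))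
    (γ : ℝ) (hγ0 : 0 < γ) (hγ1 : γ ≤ 1)
    (Wγ : Matrix (Fin n) (Fin n) ℝ) (hWγ : Wγ = (1 - γ) • (1 : Matrix (Fin n) (Fin n) ℝ) + γ • W) :
    ∀ ω : Matrix (Fin n) (Fin d) ℝ,
      frobNorm (Wγ * ω - ((n : ℝ))⁻¹ • (J * ω))
        ≤ (1 - γ * (1 - ρ)) * frobNorm (ω - ((n : ℝ))⁻¹ • (J * ω)) := by
  intro ω
  subst hJ
  set J : Matrix (Fin n) (Fin n) ℝ := Matrix.of fun _ _ => (1 : ℝ) with hJ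
  have hnR : (0 : ℝ) < (n : ℝ) := by exact_mod_cast hn
  set P : Matrix (Fin n) (Fin n) ℝ := ((n : ℝ))⁻¹ • J with hP
  have hPω : P * ω = ((n : ℝ))⁻¹ • (J * ω) := Matrix.smul_mul _ _ _
  set y : Matrix (Fin n) (Fin d) ℝ := ω - P * ω with hy
  -- J * (J * ω) = n • (J * ω)
  have hJJω : J * (J * ω) = (n : ℝ) • (J * ω) := by
    ext i j
    simp only [hJ, Matrix.mul_apply, Matrix.of_apply, one_mul, Matrix.smul_apply, smul_eq_mul]
    rw [Finset.sum_const, Finset.card_univ, Fintype.card_fin, nsmul_eq_mul]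
  -- W * (J * ω) = J * ω
  have hWJω : W * (J * ω) = J * ω := by
    ext i j
    simp only [hJ, Matrix.mul_apply, Matrix.of_apply, one_mul]
    rw [← Finset.sum_mul, hWrow, one_mul]
  have hPPω : P * (P * ω) = P * ω := by
    have hmul : ((n : ℝ))⁻¹ * ((n : ℝ))⁻¹ * (n : ℝ) = ((n : ℝ))⁻¹ := by
      field_simp
    rw [hP, Matrix.smul_mul, Matrix.smul_mul, Matrix.mul_smul, hJJω,
      smul_smul, smul_smul, hmul]
  have hWPω : W * (P * ω) = P * ω := by
    rw [hP, Matrix.smul_mul, Matrix.mul_smul, hWJω]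
  have hPy : P * y = 0 := by rw [hy, Matrix.mul_sub, hPPω, sub_self]
  have hWy : W * y = W * ω - P * ω := by rw [hy, Matrix.mul_sub, hWPω]
  -- key algebraic identity
  have key : Wγ * ω - P * ω
      = (1 - γ) • ((1 - P) * y) + γ • ((W - P) * y) := by
    rw [Matrix.sub_mul, Matrix.sub_mul, Matrix.one_mul, hPy, hWy, hWγ,
      Matrix.add_mul, Matrix.smul_mul, Matrix.smul_mul, Matrix.one_mul, hy]
    module
  -- op norm bounds
  have hρ0 : 0 ≤ ρ := by rw [hρ]; exact norm_nonneg _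
  have hIP : l2OpNorm ((1 : Matrix (Fin n) (Fin n) ℝ) - P) ≤ 1 := by
    refine l2OpNorm_le_of_sq _ zero_le_one fun v => ?_
    have hmv : ∀ i, ((1 : Matrix (Fin n) (Fin n) ℝ) - P).mulVec v i
        = v i - ((n : ℝ))⁻¹ * ∑ k, v k := by
      intro i
      simp [Matrix.mulVec, dotProduct, Matrix.sub_apply, hP, hJ, Matrix.one_apply,
        Matrix.smul_apply, sub_mul, Finset.sum_sub_distrib, Finset.mul_sum, ite_mul,
        Finset.sum_ite_eq]
    simp only [hmv]
    rw [sum_sub_const_sq, one_pow, one_mul]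
    set S := ∑ k, v k with hS
    have hc1 : (n : ℝ) * (((n : ℝ))⁻¹ * S) ^ 2 = S ^ 2 / (n : ℝ) := by
      field_simp
    have hc2 : 2 * (((n : ℝ))⁻¹ * S) * S = 2 * (S ^ 2 / (n : ℝ)) := by
      field_simp
    have hpos : 0 ≤ S ^ 2 / (n : ℝ) := div_nonneg (sq_nonneg _) (le_of_lt hnR)
    linarith
  -- Frobenius estimates
  have hb1 : frobNorm ((1 - P) * y) ≤ frobNorm y := by
    have h := frob_mul_le ((1 : Matrix (Fin n) (Fin n) ℝ) - P) y
    have hy0 := frobNorm_nonneg y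
    nlinarith [l2OpNorm_nonneg' ((1 : Matrix (Fin n) (Fin n) ℝ) - P)]
  have hb2 : frobNorm ((W - P) * y) ≤ ρ * frobNorm y := by
    rw [hρ]
    exact frob_mul_le (W - P) y
  -- triangle and scaling
  have h1γ : 0 ≤ 1 - γ := by linarith
  have tri : frobNorm ((1 - γ) • ((1 - P) * y) + γ • ((W - P) * y))
      ≤ (1 - γ) * frobNorm ((1 - P) * y) + γ * frobNorm ((W - P) * y) := by
    rw [frobNorm_eq_norm, frobNorm_eq_norm, frobNorm_eq_norm]
    calc ‖(1 - γ) • ((1 - P) * y) + γ • ((W - P) * y)‖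
        ≤ ‖(1 - γ) • ((1 - P) * y)‖ + ‖γ • ((W - P) * y)‖ := norm_add_le _ _
      _ = (1 - γ) * ‖(1 - P) * y‖ + γ * ‖(W - P) * y‖ := by
          rw [norm_smul, norm_smul, Real.norm_eq_abs, Real.norm_eq_abs,
            abs_of_nonneg h1γ, abs_of_nonneg (le_of_lt hγ0)]
  have final : frobNorm (Wγ * ω - P * ω) ≤ (1 - γ * (1 - ρ)) * frobNorm y := by
    rw [key]
    calc frobNorm ((1 - γ) • ((1 - P) * y) + γ • ((W - P) * y))
        ≤ (1 - γ) * frobNorm ((1 - P) * y) + γ * frobNorm ((W - P) * y) := tri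
      _ ≤ (1 - γ) * frobNorm y + γ * (ρ * frobNorm y) := by gcongr
      _ = (1 - γ * (1 - ρ)) * frobNorm y := by ring
  rw [← hPω]
  exact final
end

section
/- Let n, d ≥ 1, let 0 < μ ≤ L, and for i = 1,…,n let fᵢ : ℝᵈ → ℝ be differentiable, μ-strongly convex with L-Lipschitz gradient. For an n×d matrix x with rows xᵢ let ∇F(x) denote the n×d matrix with i-th row ∇fᵢ(xᵢ), and let J = 𝟙𝟙ᵀ. Let α ∈ ℝ with 0 < α ≤ 1/(μ+L), let x be an n×d matrix with row-average matrix x̄ = (1/n)J·x, let x∞ ∈ ℝᵈ, X∞ = 𝟙(x∞)ᵀ, and let p, q be n×d matrices. If x̄⁺ = x̄ − X∞ + X∞ + p + α·q − α·(1/n)J·(∇F(x) − ∇F(X∞)), i.e., x̄⁺ − X∞ = x̄ − X∞ + p + α·q − α·(1/n)J·(∇F(x) − ∇F(X∞)), then ‖x̄⁺ − X∞‖_F ≤ (1−αμ)·‖x̄ − X∞‖_F + αL·‖x − x̄‖_F + ‖p‖_F + α·‖q‖_F, where ‖·‖_F is the Frobenius norm. -/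
open scoped RealInnerProductSpace

section Aux
variable {E : Type*} [NormedAddCommGroup E] [InnerProductSpace ℝ E] [CompleteSpace E]

theorem aux_descent {f : E → ℝ} {L : ℝ} (hL : 0 ≤ L) (hf : Differentiable ℝ f)
    (hlip : ∀ x y, ‖gradient f x - gradient f y‖ ≤ L * ‖x - y‖) (x y : E) :
    f y ≤ f x + ⟪gradient f x, y - x⟫ + L * ‖y - x‖ ^ 2 := by
  have hgrad : ∀ z : E, fderiv ℝ f z = InnerProductSpace.toDual ℝ E (gradient f z) := by
    intro z
    simp [gradient]
  have bound : ∀ z ∈ segment ℝ x y, ‖fderiv ℝ f z - fderiv ℝ f x‖ ≤ L * ‖y - x‖ := by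
    rintro z ⟨a, b, ha, hb, hab, rfl⟩
    have ha' : a = 1 - b := by linarith
    have hzx : a • x + b • y - x = b • (y - x) := by
      subst ha'; module
    have h1 : ‖fderiv ℝ f (a • x + b • y) - fderiv ℝ f x‖
        = ‖gradient f (a • x + b • y) - gradient f x‖ := by
      rw [hgrad, hgrad, ← map_sub]
      exact (InnerProductSpace.toDual ℝ E).norm_map _
    have hb1 : b ≤ 1 := by linarith
    calc ‖fderiv ℝ f (a • x + b • y) - fderiv ℝ f x‖
        = ‖gradient f (a • x + b • y) - gradient f x‖ := h1
      _ ≤ L * ‖a • x + b • y - x‖ := hlip _ _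
      _ = L * (b * ‖y - x‖) := by rw [hzx, norm_smul, Real.norm_eq_abs, abs_of_nonneg hb]
      _ ≤ L * ‖y - x‖ := by nlinarith [mul_nonneg hL (mul_nonneg (sub_nonneg.2 hb1) (norm_nonneg (y - x)))]
  have key := (convex_segment x y).norm_image_sub_le_of_norm_fderiv_le'
    (fun z _ => hf z) bound (left_mem_segment ℝ x y) (right_mem_segment ℝ x y)
  rw [hgrad x, InnerProductSpace.toDual_apply_apply] at key
  have := (abs_le.mp (by rwa [Real.norm_eq_abs] at key)).2
  nlinarith [this]

theorem aux_strongmono {f : E → ℝ} {μ : ℝ}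
    (hsc : ∀ x y, f y ≥ f x + ⟪gradient f x, y - x⟫ + μ / 2 * ‖x - y‖ ^ 2) (a b : E) :
    ⟪gradient f b - gradient f a, b - a⟫ ≥ μ * ‖b - a‖ ^ 2 := by
  have h1 := hsc a b
  have h2 := hsc b a
  rw [show a - b = -(b - a) by abel, inner_neg_right, norm_sub_rev b a] at h2
  rw [inner_sub_left, show ‖b - a‖ = ‖a - b‖ from norm_sub_rev _ _]
  linarith [h1, h2]

theorem aux_cocoercive {f : E → ℝ} {μ L : ℝ} (hμ : 0 < μ) (hμL : μ ≤ L)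
    (hf : Differentiable ℝ f)
    (hsc : ∀ x y, f y ≥ f x + ⟪gradient f x, y - x⟫ + μ / 2 * ‖x - y‖ ^ 2)
    (hlip : ∀ x y, ‖gradient f x - gradient f y‖ ≤ L * ‖x - y‖) (a b : E) :
    (2 * L + μ) * ⟪gradient f b - gradient f a, b - a⟫
      ≥ ‖gradient f b - gradient f a‖ ^ 2 + 2 * μ * L * ‖b - a‖ ^ 2 := by
  set K : ℝ := L - μ / 2 with hKdef
  have hK : 0 < K := by simp only [hKdef]; linarith
  have hKne : K ≠ 0 := ne_of_gt hK
  have hL0 : (0:ℝ) ≤ L := by linarith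
  -- lower bound for the shifted function h = f - μ/2‖·‖²
  have Hlow : ∀ u v : E, f v - μ / 2 * ‖v‖ ^ 2
      ≥ f u - μ / 2 * ‖u‖ ^ 2 + ⟪gradient f u - μ • u, v - u⟫ := by
    intro u v
    have h := hsc u v
    have e1 : ⟪gradient f u - μ • u, v - u⟫
        = ⟪gradient f u, v - u⟫ - μ * ⟪u, v - u⟫ := by
      rw [inner_sub_left, real_inner_smul_left]
    have e2 : ‖u - v‖ ^ 2 = ‖u‖ ^ 2 - 2 * ⟪u, v⟫ + ‖v‖ ^ 2 := norm_sub_sq_real u v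
    have e3 : ⟪u, v - u⟫ = ⟪u, v⟫ - ‖u‖ ^ 2 := by
      rw [inner_sub_right, real_inner_self_eq_norm_sq]
    rw [e1, e3]
    rw [e2] at h
    linarith [h]
  -- upper bound for the shifted function
  have Hup : ∀ u v : E, f v - μ / 2 * ‖v‖ ^ 2
      ≤ f u - μ / 2 * ‖u‖ ^ 2 + ⟪gradient f u - μ • u, v - u⟫ + K * ‖v - u‖ ^ 2 := by
    intro u v
    have h := aux_descent hL0 hf hlip u v
    have e1 : ⟪gradient f u - μ • u, v - u⟫
        = ⟪gradient f u, v - u⟫ - μ * ⟪u, v - u⟫ := by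
      rw [inner_sub_left, real_inner_smul_left]
    have e2 : ‖v - u‖ ^ 2 = ‖v‖ ^ 2 - 2 * ⟪v, u⟫ + ‖u‖ ^ 2 := norm_sub_sq_real v u
    have e3 : ⟪u, v - u⟫ = ⟪u, v⟫ - ‖u‖ ^ 2 := by
      rw [inner_sub_right, real_inner_self_eq_norm_sq]
    have e4 : ⟪u, v⟫ = ⟪v, u⟫ := (real_inner_comm u v).symm
    rw [e1, e3, e4]
    simp only [hKdef]
    rw [e2] at h ⊢
    linarith [h]
  -- key inequality (co-coercivity of the shifted function)
  have Key : ∀ u v : E, f v - μ / 2 * ‖v‖ ^ 2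
      ≥ f u - μ / 2 * ‖u‖ ^ 2 + ⟪gradient f u - μ • u, v - u⟫
        + 1 / (4 * K) * ‖(gradient f v - μ • v) - (gradient f u - μ • u)‖ ^ 2 := by
    intro u v
    set gu : E := gradient f u - μ • u with hgu
    set gv : E := gradient f v - μ • v with hgv
    set G : E := gv - gu with hGdef
    set z : E := v - (1 / (2 * K)) • G with hz
    have h1 := Hlow u z
    have h2 := Hup v z
    have ez1 : z - v = -((1 / (2 * K)) • G) := by rw [hz]; abel
    have e_norm : ‖z - v‖ ^ 2 = (1 / (2 * K)) ^ 2 * ‖G‖ ^ 2 := by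
      rw [ez1, norm_neg, norm_smul, mul_pow, Real.norm_eq_abs, sq_abs]
    have e_in1 : ⟪gv, z - v⟫ = -(1 / (2 * K) * ⟪gv, G⟫) := by
      rw [ez1, inner_neg_right, real_inner_smul_right]
    have e_in2 : ⟪gu, z - u⟫ = ⟪gu, v - u⟫ - 1 / (2 * K) * ⟪gu, G⟫ := by
      rw [show z - u = (v - u) - (1 / (2 * K)) • G by rw [hz]; abel,
        inner_sub_right, real_inner_smul_right]
    have e_G : ⟪gv, G⟫ - ⟪gu, G⟫ = ‖G‖ ^ 2 := by
      rw [← inner_sub_left, ← hGdef, real_inner_self_eq_norm_sq]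
    rw [e_in1, e_norm] at h2
    rw [e_in2] at h1
    have hfield : K * (1 / (2 * K)) ^ 2 = 1 / (4 * K) := by
      field_simp; ring
    have hhalf : 1 / (2 * K) = 2 * (1 / (4 * K)) := by field_simp; ring
    have hcomb : ⟪gv, G⟫ = ⟪gu, G⟫ + ‖G‖ ^ 2 := by linarith [e_G]
    rw [hcomb] at h2
    have h4Kpos : 0 < 1 / (4 * K) := by positivity
    nlinarith [h1, h2]
  -- sum the two key inequalities
  have k1 := Key a b
  have k2 := Key b a
  set ga : E := gradient f a - μ • a with hga
  set gb : E := gradient f b - μ • b with hgb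
  have eswap : ⟪gb, a - b⟫ = -⟪gb, b - a⟫ := by
    rw [show a - b = -(b - a) by abel, inner_neg_right]
  have enorm : ‖ga - gb‖ = ‖gb - ga‖ := norm_sub_rev _ _
  rw [eswap, enorm] at k2
  have hGa : ⟪gb - ga, b - a⟫ ≥ 1 / (2 * K) * ‖gb - ga‖ ^ 2 := by
    rw [inner_sub_left]
    have hhalf : 1 / (2 * K) = 2 * (1 / (4 * K)) := by field_simp; ring
    rw [hhalf]
    linarith [k1, k2]
  -- expand G = H - μ D
  set H : E := gradient f b - gradient f a with hH
  set D : E := b - a with hD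
  have egb : gb - ga = H - μ • D := by
    simp only [hgb, hga, hH, hD, smul_sub]; abel
  have einner : ⟪H - μ • D, D⟫ = ⟪H, D⟫ - μ * ‖D‖ ^ 2 := by
    rw [inner_sub_left, real_inner_smul_left, real_inner_self_eq_norm_sq]
  have enorm2 : ‖H - μ • D‖ ^ 2 = ‖H‖ ^ 2 - 2 * (μ * ⟪H, D⟫) + μ ^ 2 * ‖D‖ ^ 2 := by
    rw [norm_sub_sq_real, real_inner_smul_right, norm_smul, mul_pow, Real.norm_eq_abs, sq_abs]
  rw [egb, einner, enorm2] at hGa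
  have h2K : (0:ℝ) < 2 * K := by linarith
  have hKexp : 2 * K = 2 * L - μ := by rw [hKdef]; ring
  -- from hGa : ⟪H,D⟫ - μ‖D‖² ≥ (1/(2K)) * (‖H‖² - 2μ⟪H,D⟫ + μ²‖D‖²)
  have hGa' : (2 * K) * (⟪H, D⟫ - μ * ‖D‖ ^ 2) ≥ ‖H‖ ^ 2 - 2 * (μ * ⟪H, D⟫) + μ ^ 2 * ‖D‖ ^ 2 := by
    have := mul_le_mul_of_nonneg_left hGa (le_of_lt h2K)
    calc ‖H‖ ^ 2 - 2 * (μ * ⟪H, D⟫) + μ ^ 2 * ‖D‖ ^ 2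
        = (2 * K) * (1 / (2 * K) * (‖H‖ ^ 2 - 2 * (μ * ⟪H, D⟫) + μ ^ 2 * ‖D‖ ^ 2)) := by
          field_simp
      _ ≤ (2 * K) * (⟪H, D⟫ - μ * ‖D‖ ^ 2) := this
  rw [hKexp] at hGa'
  nlinarith [hGa']

theorem aux_contraction {μ L α : ℝ} (hμ : 0 < μ) (hμL : μ ≤ L) (hα0 : 0 < α)
    (hα : α ≤ 1 / (μ + L)) (Δ G : E)
    (h1 : (2 * L + μ) * ⟪G, Δ⟫ ≥ ‖G‖ ^ 2 + 2 * μ * L * ‖Δ‖ ^ 2)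
    (h2 : ⟪G, Δ⟫ ≥ μ * ‖Δ‖ ^ 2) :
    ‖Δ - α • G‖ ≤ (1 - α * μ) * ‖Δ‖ := by
  have hμLpos : (0:ℝ) < μ + L := by linarith
  have hαμL : α * (μ + L) ≤ 1 := (le_div_iff₀ hμLpos).1 hα
  have h1' : 0 ≤ 1 - α * μ := by nlinarith
  have hG : μ * ‖Δ‖ ≤ ‖G‖ := by
    rcases eq_or_ne ‖Δ‖ 0 with h | h
    · rw [h, mul_zero]; exact norm_nonneg _
    · have hcs := real_inner_le_norm G Δ
      have hpos : 0 < ‖Δ‖ := lt_of_le_of_ne (norm_nonneg _) (Ne.symm h)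
      nlinarith
  have expand : ‖Δ - α • G‖ ^ 2 = ‖Δ‖ ^ 2 - 2 * α * ⟪G, Δ⟫ + α ^ 2 * ‖G‖ ^ 2 := by
    rw [norm_sub_sq_real, real_inner_smul_right, norm_smul, mul_pow, Real.norm_eq_abs, sq_abs,
      real_inner_comm]
    ring
  have hsq : ‖Δ - α • G‖ ^ 2 ≤ ((1 - α * μ) * ‖Δ‖) ^ 2 := by
    rw [expand]
    have s1 : 0 ≤ 2 * α * ((2 * L + μ) * ⟪G, Δ⟫ - (‖G‖ ^ 2 + 2 * μ * L * ‖Δ‖ ^ 2)) :=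
      mul_nonneg (by linarith) (by linarith)
    have h2Lμ : α * (2 * L + μ) ≤ 2 := by nlinarith
    have hc : 0 ≤ 2 * α - α ^ 2 * (2 * L + μ) := by nlinarith
    have s2 : 0 ≤ (2 * α - α ^ 2 * (2 * L + μ)) * (‖G‖ ^ 2 - μ ^ 2 * ‖Δ‖ ^ 2) :=
      mul_nonneg hc (by nlinarith [mul_le_mul hG hG (mul_nonneg hμ.le (norm_nonneg Δ)) (norm_nonneg G)])
    have hpos2 : (0:ℝ) < 2 * L + μ := by linarith
    nlinarith [s1, s2, hpos2]
  calc ‖Δ - α • G‖ = Real.sqrt (‖Δ - α • G‖ ^ 2) := (Real.sqrt_sq (norm_nonneg _)).symm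
    _ ≤ Real.sqrt (((1 - α * μ) * ‖Δ‖) ^ 2) := Real.sqrt_le_sqrt hsq
    _ = (1 - α * μ) * ‖Δ‖ := Real.sqrt_sq (mul_nonneg h1' (norm_nonneg _))
end Aux



/-- The Frobenius norm of an n×d matrix represented by its rows
v i ∈ ℝᵈ: ‖v‖_F = √(Σᵢ ‖vᵢ‖²). -/
noncomputable def rowFrobNorm {n d : ℕ} (v : Fin n → EuclideanSpace ℝ (Fin d)) : ℝ :=
  Real.sqrt (∑ i, ‖v i‖ ^ 2)

noncomputable def toL2 {n d : ℕ} (v : Fin n → EuclideanSpace ℝ (Fin d)) :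
    PiLp 2 (fun _ : Fin n => EuclideanSpace ℝ (Fin d)) := WithLp.toLp 2 v

theorem rowFrob_eq_norm {n d : ℕ} (v : Fin n → EuclideanSpace ℝ (Fin d)) :
    rowFrobNorm v = ‖toL2 v‖ := by
  rw [rowFrobNorm]
  have h : (∑ i, ‖v i‖ ^ 2) = ‖toL2 v‖ ^ 2 :=
    (PiLp.norm_sq_eq_of_L2 (fun _ : Fin n => EuclideanSpace ℝ (Fin d)) (toL2 v)).symm
  rw [h, Real.sqrt_sq (norm_nonneg _)]

/-- Deterministic form of inequality (16) in the proof of Lemma 1 of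
"Compressed Differentially Private Distributed Optimization with Linear
Convergence": if the averaged-iterate recursion
x̄⁺ − X∞ = x̄ − X∞ + p + α·q − α·(1/n)J·(∇F(x) − ∇F(X∞))
holds (stated rowwise; every row of x̄ equals (1/n)Σⱼ xⱼ and every row of X∞
equals x∞), then the optimality gap contracts:
‖x̄⁺ − X∞‖_F ≤ (1−αμ)‖x̄ − X∞‖_F + αL‖x − x̄‖_F + ‖p‖_F + α‖q‖_F. -/
theorem stmt_9 {n d : ℕ} (hn : 1 ≤ n) (hd : 1 ≤ d)
    (μ L α : ℝ) (hμ : 0 < μ) (hμL : μ ≤ L)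
    (f : Fin n → EuclideanSpace ℝ (Fin d) → ℝ)
    (hf : ∀ i, Differentiable ℝ (f i))
    (hsc : ∀ i, ∀ x y : EuclideanSpace ℝ (Fin d),
      f i y ≥ f i x + ⟪gradient (f i) x, y - x⟫ + μ / 2 * ‖x - y‖ ^ 2)
    (hlip : ∀ i, ∀ x y : EuclideanSpace ℝ (Fin d),
      ‖gradient (f i) x - gradient (f i) y‖ ≤ L * ‖x - y‖)
    (hα0 : 0 < α) (hα : α ≤ 1 / (μ + L))
    (x p q xplus : Fin n → EuclideanSpace ℝ (Fin d))
    (xinf : EuclideanSpace ℝ (Fin d))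
    (hrec : ∀ i, xplus i - xinf
        = ((n : ℝ)⁻¹ • (∑ j, x j) - xinf) + p i + α • q i
          - α • ((n : ℝ)⁻¹ •
              ∑ j, (gradient (f j) (x j) - gradient (f j) xinf))) :
    rowFrobNorm (fun i => xplus i - xinf)
      ≤ (1 - α * μ) * rowFrobNorm (fun _ : Fin n => (n : ℝ)⁻¹ • (∑ j, x j) - xinf)
        + α * L * rowFrobNorm (fun i => x i - (n : ℝ)⁻¹ • (∑ j, x j))
        + rowFrobNorm p + α * rowFrobNorm q := by
  classical
  have hn0 : (0:ℝ) < n := by exact_mod_cast hn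
  have hninv : (0:ℝ) ≤ (n:ℝ)⁻¹ := by positivity
  set xb : EuclideanSpace ℝ (Fin d) := (n : ℝ)⁻¹ • (∑ j, x j) with hxb
  set Δ : EuclideanSpace ℝ (Fin d) := xb - xinf with hΔ
  set G : EuclideanSpace ℝ (Fin d) := (n : ℝ)⁻¹ • ∑ j, (gradient (f j) xb - gradient (f j) xinf) with hGdef
  set w : EuclideanSpace ℝ (Fin d) := (n : ℝ)⁻¹ • ∑ j, (gradient (f j) (x j) - gradient (f j) xb) with hwdef
  set u : EuclideanSpace ℝ (Fin d) := Δ - α • G with hu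
  set Gj : Fin n → EuclideanSpace ℝ (Fin d) := fun j => gradient (f j) xb - gradient (f j) xinf with hGj
  -- averaged co-coercivity
  have hinner : ⟪G, Δ⟫ = (n : ℝ)⁻¹ * ∑ j, ⟪Gj j, Δ⟫ := by
    rw [hGdef, real_inner_smul_left, sum_inner]
  have hGnormsq : ‖G‖ ^ 2 ≤ (n : ℝ)⁻¹ * ∑ j, ‖Gj j‖ ^ 2 := by
    have hb1 : ‖G‖ ≤ (n : ℝ)⁻¹ * ∑ j, ‖Gj j‖ := by
      rw [hGdef, norm_smul, Real.norm_eq_abs, abs_of_nonneg hninv]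
      exact mul_le_mul_of_nonneg_left (norm_sum_le _ _) hninv
    have hb2 : (∑ j, ‖Gj j‖) ^ 2 ≤ (n : ℝ) * ∑ j, ‖Gj j‖ ^ 2 := by
      have := sq_sum_le_card_mul_sum_sq (s := (Finset.univ : Finset (Fin n)))
        (f := fun j => ‖Gj j‖)
      simpa using this
    have hssum : 0 ≤ ∑ j, ‖Gj j‖ := Finset.sum_nonneg fun j _ => norm_nonneg _
    have hb1' : ‖G‖ ^ 2 ≤ ((n : ℝ)⁻¹ * ∑ j, ‖Gj j‖) ^ 2 :=
      pow_le_pow_left₀ (norm_nonneg _) hb1 2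
    calc ‖G‖ ^ 2 ≤ ((n : ℝ)⁻¹ * ∑ j, ‖Gj j‖) ^ 2 := hb1'
      _ = (n : ℝ)⁻¹ ^ 2 * (∑ j, ‖Gj j‖) ^ 2 := by ring
      _ ≤ (n : ℝ)⁻¹ ^ 2 * ((n : ℝ) * ∑ j, ‖Gj j‖ ^ 2) := by
          exact mul_le_mul_of_nonneg_left hb2 (by positivity)
      _ = (n : ℝ)⁻¹ * ∑ j, ‖Gj j‖ ^ 2 := by
          field_simp
  have h1 : (2 * L + μ) * ⟪G, Δ⟫ ≥ ‖G‖ ^ 2 + 2 * μ * L * ‖Δ‖ ^ 2 := by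
    have hj : ∀ j ∈ Finset.univ, ‖Gj j‖ ^ 2 + 2 * μ * L * ‖Δ‖ ^ 2 ≤ (2 * L + μ) * ⟪Gj j, Δ⟫ := by
      intro j _
      exact aux_cocoercive hμ hμL (hf j) (hsc j) (hlip j) xinf xb
    have hsum := Finset.sum_le_sum hj
    rw [Finset.sum_add_distrib, Finset.sum_const, ← Finset.mul_sum] at hsum
    simp only [Finset.card_univ, Fintype.card_fin, nsmul_eq_mul] at hsum
    have : (n : ℝ)⁻¹ * (∑ j, ‖Gj j‖ ^ 2 + (n : ℝ) * (2 * μ * L * ‖Δ‖ ^ 2))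
        ≤ (n : ℝ)⁻¹ * ((2 * L + μ) * ∑ j, ⟪Gj j, Δ⟫) :=
      mul_le_mul_of_nonneg_left hsum hninv
    rw [ge_iff_le, hinner]
    calc ‖G‖ ^ 2 + 2 * μ * L * ‖Δ‖ ^ 2
        ≤ (n : ℝ)⁻¹ * ∑ j, ‖Gj j‖ ^ 2 + 2 * μ * L * ‖Δ‖ ^ 2 := by linarith [hGnormsq]
      _ = (n : ℝ)⁻¹ * (∑ j, ‖Gj j‖ ^ 2 + (n : ℝ) * (2 * μ * L * ‖Δ‖ ^ 2)) := by
          field_simp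
      _ ≤ (n : ℝ)⁻¹ * ((2 * L + μ) * ∑ j, ⟪Gj j, Δ⟫) := this
      _ = (2 * L + μ) * ((n : ℝ)⁻¹ * ∑ j, ⟪Gj j, Δ⟫) := by ring
  have h2 : ⟪G, Δ⟫ ≥ μ * ‖Δ‖ ^ 2 := by
    have hj : ∀ j ∈ Finset.univ, μ * ‖Δ‖ ^ 2 ≤ ⟪Gj j, Δ⟫ := by
      intro j _
      exact aux_strongmono (hsc j) xinf xb
    have hsum := Finset.sum_le_sum hj
    rw [Finset.sum_const] at hsum
    simp only [Finset.card_univ, Fintype.card_fin, nsmul_eq_mul] at hsum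
    rw [ge_iff_le, hinner]
    calc μ * ‖Δ‖ ^ 2 = (n : ℝ)⁻¹ * ((n : ℝ) * (μ * ‖Δ‖ ^ 2)) := by field_simp
      _ ≤ (n : ℝ)⁻¹ * ∑ j, ⟪Gj j, Δ⟫ := mul_le_mul_of_nonneg_left hsum hninv
  have hucontr : ‖u‖ ≤ (1 - α * μ) * ‖Δ‖ :=
    aux_contraction hμ hμL hα0 hα Δ G h1 h2
  -- bound on w
  have hwbound : ‖w‖ ≤ (n : ℝ)⁻¹ * (L * ∑ j, ‖x j - xb‖) := by
    rw [hwdef, norm_smul, Real.norm_eq_abs, abs_of_nonneg hninv]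
    refine mul_le_mul_of_nonneg_left ?_ hninv
    calc ‖∑ j, (gradient (f j) (x j) - gradient (f j) xb)‖
        ≤ ∑ j, ‖gradient (f j) (x j) - gradient (f j) xb‖ := norm_sum_le _ _
      _ ≤ ∑ j, L * ‖x j - xb‖ := Finset.sum_le_sum fun j _ => hlip j (x j) xb
      _ = L * ∑ j, ‖x j - xb‖ := by rw [Finset.mul_sum]
  -- row identity
  have hrow : ∀ i, xplus i - xinf = u + (-(α • w)) + p i + α • q i := by
    intro i
    rw [hrec i]
    have hsplit : (∑ j, (gradient (f j) (x j) - gradient (f j) xinf))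
        = (∑ j, (gradient (f j) (x j) - gradient (f j) xb))
          + ∑ j, (gradient (f j) xb - gradient (f j) xinf) := by
      rw [← Finset.sum_add_distrib]
      exact Finset.sum_congr rfl fun j _ => by abel
    rw [hsplit, hu, hwdef, hGdef, hΔ]
    rw [smul_add, smul_add]
    abel
  -- Frobenius norm as PiLp norm
  have hFrob : ∀ v : Fin n → EuclideanSpace ℝ (Fin d), rowFrobNorm v = ‖toL2 v‖ :=
    rowFrob_eq_norm
  have hconst : ∀ c : EuclideanSpace ℝ (Fin d),
      ‖toL2 (fun _ : Fin n => c)‖ = Real.sqrt n * ‖c‖ := by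
    intro c
    have h : ‖toL2 (fun _ : Fin n => c)‖ ^ 2 = (n : ℝ) * ‖c‖ ^ 2 := by
      have := PiLp.norm_sq_eq_of_L2 (fun _ : Fin n => EuclideanSpace ℝ (Fin d))
        (toL2 (fun _ : Fin n => c))
      rw [this]
      show (∑ _i : Fin n, ‖c‖ ^ 2) = (n : ℝ) * ‖c‖ ^ 2
      rw [Finset.sum_const, Finset.card_univ, Fintype.card_fin, nsmul_eq_mul]
    calc ‖toL2 (fun _ : Fin n => c)‖ = Real.sqrt (‖toL2 (fun _ : Fin n => c)‖ ^ 2) :=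
          (Real.sqrt_sq (norm_nonneg _)).symm
      _ = Real.sqrt ((n : ℝ) * ‖c‖ ^ 2) := by rw [h]
      _ = Real.sqrt n * ‖c‖ := by
          rw [Real.sqrt_mul (by positivity), Real.sqrt_sq (norm_nonneg _)]
  have hdecomp : toL2 (fun i => xplus i - xinf)
      = toL2 (fun _ => u) + toL2 (fun _ => -(α • w)) + toL2 p + toL2 (fun i => α • q i) := by
    rw [show (fun i => xplus i - xinf) = fun i : Fin n => u + (-(α • w)) + p i + α • q i from
      funext hrow]
    rfl
  have htri : ‖toL2 (fun i => xplus i - xinf)‖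
      ≤ ‖toL2 (fun _ : Fin n => u)‖ + ‖toL2 (fun _ : Fin n => -(α • w))‖ + ‖toL2 p‖
        + ‖toL2 (fun i => α • q i)‖ := by
    rw [hdecomp]
    refine le_trans (norm_add_le _ _) ?_
    exact add_le_add (le_trans (norm_add_le _ _) (add_le_add (norm_add_le _ _) le_rfl)) le_rfl
  -- bound each piece
  have t1 : ‖toL2 (fun _ : Fin n => u)‖ ≤ (1 - α * μ) * rowFrobNorm (fun _ : Fin n => Δ) := by
    rw [hconst, hFrob, hconst]
    calc Real.sqrt n * ‖u‖ ≤ Real.sqrt n * ((1 - α * μ) * ‖Δ‖) :=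
          mul_le_mul_of_nonneg_left hucontr (Real.sqrt_nonneg _)
      _ = (1 - α * μ) * (Real.sqrt n * ‖Δ‖) := by ring
  have t2 : ‖toL2 (fun _ : Fin n => -(α • w))‖ ≤ α * L * rowFrobNorm (fun i => x i - xb) := by
    rw [hconst, norm_neg, norm_smul, Real.norm_eq_abs, abs_of_nonneg hα0.le]
    have hkey : Real.sqrt n * ((n : ℝ)⁻¹ * ∑ j, ‖x j - xb‖)
        ≤ rowFrobNorm (fun i => x i - xb) := by
      rw [rowFrobNorm]
      rw [Real.le_sqrt (by positivity) (Finset.sum_nonneg fun j _ => by positivity)]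
      have hb2 : (∑ j, ‖x j - xb‖) ^ 2 ≤ (n : ℝ) * ∑ j, ‖x j - xb‖ ^ 2 := by
        have := sq_sum_le_card_mul_sum_sq (s := (Finset.univ : Finset (Fin n)))
          (f := fun j => ‖x j - xb‖)
        simpa using this
      have hsqn : Real.sqrt n ^ 2 = (n : ℝ) := Real.sq_sqrt hn0.le
      calc (Real.sqrt n * ((n : ℝ)⁻¹ * ∑ j, ‖x j - xb‖)) ^ 2
          = Real.sqrt n ^ 2 * ((n : ℝ)⁻¹ ^ 2 * (∑ j, ‖x j - xb‖) ^ 2) := by ring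
        _ = (n : ℝ)⁻¹ * (∑ j, ‖x j - xb‖) ^ 2 := by
            rw [hsqn]; field_simp
        _ ≤ (n : ℝ)⁻¹ * ((n : ℝ) * ∑ j, ‖x j - xb‖ ^ 2) :=
            mul_le_mul_of_nonneg_left hb2 hninv
        _ = ∑ j, ‖x j - xb‖ ^ 2 := by field_simp
    calc Real.sqrt n * (α * ‖w‖)
        ≤ Real.sqrt n * (α * ((n : ℝ)⁻¹ * (L * ∑ j, ‖x j - xb‖))) :=
          mul_le_mul_of_nonneg_left (mul_le_mul_of_nonneg_left hwbound hα0.le)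
            (Real.sqrt_nonneg _)
      _ = (α * L) * (Real.sqrt n * ((n : ℝ)⁻¹ * ∑ j, ‖x j - xb‖)) := by ring
      _ ≤ (α * L) * rowFrobNorm (fun i => x i - xb) :=
          mul_le_mul_of_nonneg_left hkey (mul_nonneg hα0.le (le_trans hμ.le hμL))
  have t3 : ‖toL2 p‖ = rowFrobNorm p := (hFrob p).symm
  have t4 : ‖toL2 (fun i => α • q i)‖ = α * rowFrobNorm q := by
    have h : toL2 (fun i => α • q i) = α • toL2 q := rfl
    rw [h, norm_smul, Real.norm_eq_abs, abs_of_nonneg hα0.le, hFrob]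
  rw [hFrob]
  calc ‖toL2 (fun i => xplus i - xinf)‖
      ≤ ‖toL2 (fun _ : Fin n => u)‖ + ‖toL2 (fun _ : Fin n => -(α • w))‖ + ‖toL2 p‖
        + ‖toL2 (fun i => α • q i)‖ := htri
    _ ≤ (1 - α * μ) * rowFrobNorm (fun _ : Fin n => Δ)
        + α * L * rowFrobNorm (fun i => x i - xb) + rowFrobNorm p + α * rowFrobNorm q := by
        rw [t3, t4]
        exact add_le_add (add_le_add (add_le_add t1 t2) le_rfl) le_rfl
end

section
/- Let n, d ≥ 1, L > 0, and for i = 1,…,n let fᵢ : ℝᵈ → ℝ be differentiable with L-Lipschitz gradient. For an n×d matrix x with rows xᵢ let ∇F(x) denote the n×d matrix with i-th row ∇fᵢ(xᵢ), and let J = 𝟙𝟙ᵀ. Let y be an n×d matrix, (η_y(t))_{t∈ℕ} a summable family of n×d matrices with sum S, k ∈ ℕ, x an n×d matrix, and x∞ ∈ ℝᵈ with X∞ = 𝟙(x∞)ᵀ. Suppose 𝟙ᵀy = 𝟙ᵀ∇F(x) + Σ_{t=0}^{k−1} 𝟙ᵀη_y(t) and 𝟙ᵀ∇F(X∞) = −𝟙ᵀS.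 Then ‖(1/n)J·y‖_F ≤ L·‖x − (1/n)J·x‖_F + L·‖(1/n)J·x − X∞‖_F + ‖(1/n)J·(S − Σ_{t=0}^{k−1} η_y(t))‖_F, where ‖·‖_F is the Frobenius norm. -/
lemma constFrob {n d : ℕ} (c : EuclideanSpace ℝ (Fin d)) :
    rowFrobNorm (fun _ : Fin n => c) = Real.sqrt n * ‖c‖ := by
  unfold rowFrobNorm
  rw [Finset.sum_const, Finset.card_univ, Fintype.card_fin, nsmul_eq_mul,
    Real.sqrt_mul (by positivity), Real.sqrt_sq (norm_nonneg _)]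

/-- Deterministic form of the bound (26) on the averaged tracking variable in
the proof of Lemma 1 of "Compressed Differentially Private Distributed
Optimization with Linear Convergence". Matrices with rows in ℝᵈ are
represented as functions Fin n → EuclideanSpace ℝ (Fin d); (1/n)J·A has every
row equal to (1/n)ΣⱼAⱼ. Combining the gradient-tracking invariant with the
defining equation of x∞, the averaged tracking variable ȳ = (1/n)Jy is bounded
by L times the consensus error plus L times the optimality gap plus the
averaged noise tail. -/
theorem stmt_11 {n d : ℕ} (hn : 1 ≤ n) (hd : 1 ≤ d)
    (L : ℝ) (hL : 0 < L)
    (f : Fin n → EuclideanSpace ℝ (Fin d) → ℝ)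
    (hf : ∀ i, Differentiable ℝ (f i))
    (hlip : ∀ i, ∀ x y : EuclideanSpace ℝ (Fin d),
      ‖gradient (f i) x - gradient (f i) y‖ ≤ L * ‖x - y‖)
    (y : Fin n → EuclideanSpace ℝ (Fin d))
    (ηy : ℕ → Fin n → EuclideanSpace ℝ (Fin d))
    (S : Fin n → EuclideanSpace ℝ (Fin d))
    (hS : HasSum ηy S)
    (k : ℕ)
    (x : Fin n → EuclideanSpace ℝ (Fin d))
    (xinf : EuclideanSpace ℝ (Fin d))
    (hy : ∑ i, y i
        = (∑ i, gradient (f i) (x i)) + ∑ t ∈ Finset.range k, ∑ i, ηy t i)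
    (hxinf : ∑ i, gradient (f i) xinf = -∑ i, S i) :
    rowFrobNorm (fun _ : Fin n => (n : ℝ)⁻¹ • ∑ j, y j)
      ≤ L * rowFrobNorm (fun i => x i - (n : ℝ)⁻¹ • ∑ j, x j)
        + L * rowFrobNorm (fun _ : Fin n => (n : ℝ)⁻¹ • (∑ j, x j) - xinf)
        + rowFrobNorm (fun _ : Fin n =>
            (n : ℝ)⁻¹ • ((∑ j, S j) - ∑ t ∈ Finset.range k, ∑ j, ηy t j)) := by
  have hn' : (0:ℝ) < n := by exact_mod_cast hn
  set xb : EuclideanSpace ℝ (Fin d) := (n : ℝ)⁻¹ • ∑ j, x j with hxb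
  set D : EuclideanSpace ℝ (Fin d) :=
    (∑ j, S j) - ∑ t ∈ Finset.range k, ∑ j, ηy t j with hD
  have key : ∑ i, y i
      = (∑ i, (gradient (f i) (x i) - gradient (f i) xinf)) - D := by
    rw [Finset.sum_sub_distrib, hxinf, hD, hy]
    abel
  -- bound on the norm of the sum
  have hsum : ‖∑ i, y i‖
      ≤ (L * ∑ i, ‖x i - xb‖) + (n : ℝ) * (L * ‖xb - xinf‖) + ‖D‖ := by
    rw [key]
    refine (norm_sub_le _ _).trans ?_
    gcongr
    refine (norm_sum_le _ _).trans ?_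
    have : ∀ i : Fin n, ‖gradient (f i) (x i) - gradient (f i) xinf‖
        ≤ L * ‖x i - xb‖ + L * ‖xb - xinf‖ := by
      intro i
      refine (hlip i _ _).trans ?_
      have htri : ‖x i - xinf‖ ≤ ‖x i - xb‖ + ‖xb - xinf‖ := by
        have := dist_triangle (x i) xb xinf
        simpa [dist_eq_norm] using this
      nlinarith [norm_nonneg (x i - xinf)]
    refine (Finset.sum_le_sum fun i _ => this i).trans_eq ?_
    rw [Finset.sum_add_distrib, Finset.sum_const, Finset.card_univ, Fintype.card_fin,
      ← Finset.mul_sum, nsmul_eq_mul]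
  -- Cauchy–Schwarz: ∑ ‖x i - xb‖ ≤ √n * √(∑ ‖x i - xb‖²)
  have hCS : ∑ i, ‖x i - xb‖
      ≤ Real.sqrt n * Real.sqrt (∑ i, ‖x i - xb‖ ^ 2) := by
    have h := sq_sum_le_card_mul_sum_sq (s := (Finset.univ : Finset (Fin n)))
      (f := fun i => ‖x i - xb‖)
    rw [Finset.card_univ, Fintype.card_fin] at h
    have hnn : 0 ≤ ∑ i, ‖x i - xb‖ := Finset.sum_nonneg fun i _ => norm_nonneg _
    have := Real.sqrt_le_sqrt h
    rwa [Real.sqrt_sq hnn, Real.sqrt_mul (by positivity)] at this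
  have hsq : Real.sqrt (n:ℝ) * Real.sqrt (n:ℝ) = (n:ℝ) :=
    Real.mul_self_sqrt (le_of_lt hn')
  have hsqpos : 0 < Real.sqrt (n:ℝ) := Real.sqrt_pos.mpr hn'
  rw [constFrob, constFrob, constFrob]
  have hyn : ‖(n : ℝ)⁻¹ • ∑ j, y j‖ = (n:ℝ)⁻¹ * ‖∑ j, y j‖ := by
    rw [norm_smul]; simp [abs_of_pos (inv_pos.mpr hn')]
  have hDn : ‖(n : ℝ)⁻¹ • D‖ = (n:ℝ)⁻¹ * ‖D‖ := by
    rw [norm_smul]; simp [abs_of_pos (inv_pos.mpr hn')]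
  rw [hyn, hDn]
  have hfrob : rowFrobNorm (fun i => x i - xb) = Real.sqrt (∑ i, ‖x i - xb‖ ^ 2) := rfl
  rw [hfrob]
  -- now pure real arithmetic
  have h1 : Real.sqrt (n:ℝ) * ((n:ℝ)⁻¹ * ‖∑ j, y j‖)
      ≤ Real.sqrt (n:ℝ) * ((n:ℝ)⁻¹ *
        ((L * ∑ i, ‖x i - xb‖) + (n : ℝ) * (L * ‖xb - xinf‖) + ‖D‖)) := by
    gcongr
  refine h1.trans ?_
  have h2 : Real.sqrt (n:ℝ) * ((n:ℝ)⁻¹ * (L * ∑ i, ‖x i - xb‖))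
      ≤ L * Real.sqrt (∑ i, ‖x i - xb‖ ^ 2) := by
    have : Real.sqrt (n:ℝ) * ((n:ℝ)⁻¹ * (L * ∑ i, ‖x i - xb‖))
        ≤ Real.sqrt (n:ℝ) * ((n:ℝ)⁻¹ *
          (L * (Real.sqrt n * Real.sqrt (∑ i, ‖x i - xb‖ ^ 2)))) := by
      gcongr
    refine this.trans_eq ?_
    have heq : Real.sqrt (n:ℝ) * ((n:ℝ)⁻¹ *
          (L * (Real.sqrt n * Real.sqrt (∑ i, ‖x i - xb‖ ^ 2))))
        = (Real.sqrt (n:ℝ) * Real.sqrt (n:ℝ)) * ((n:ℝ)⁻¹ *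
          (L * Real.sqrt (∑ i, ‖x i - xb‖ ^ 2))) := by ring
    rw [heq, hsq, ← mul_assoc, mul_inv_cancel₀ hn'.ne', one_mul]
  have hinv : (n:ℝ)⁻¹ * (n:ℝ) = 1 := inv_mul_cancel₀ hn'.ne'
  have expand : Real.sqrt (n:ℝ) * ((n:ℝ)⁻¹ *
        ((L * ∑ i, ‖x i - xb‖) + (n : ℝ) * (L * ‖xb - xinf‖) + ‖D‖))
      = Real.sqrt (n:ℝ) * ((n:ℝ)⁻¹ * (L * ∑ i, ‖x i - xb‖))
        + ((n:ℝ)⁻¹ * (n:ℝ)) * (L * (Real.sqrt (n:ℝ) * ‖xb - xinf‖))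
        + Real.sqrt (n:ℝ) * ((n:ℝ)⁻¹ * ‖D‖) := by ring
  rw [expand, hinv, one_mul]
  linarith [h2]
end

section
/- Let μ, L, m, φ, ρ, λ̄, γ, α, ζ₁, ζ₂, ζ₃, ζ₄ be real numbers with 0 < μ ≤ L, m ∈ (0,1), φ ∈ [0,1), ρ ∈ [0,1), λ̄ > 0, γ > 0, α > 0, and ζ₁, ζ₂, ζ₃, ζ₄ > 0. If α ≤ γλ̄/L, 2·√φ·γ·λ̄·(2ζ₁+ζ₂+ζ₃+ζ₄) ≤ (1−√φ)·ζ₄, and γ·λ̄·m·μ ≤ (1−√φ)·L, then √φ(γλ̄+αL)·ζ₁ + √φαL·ζ₂ + √φαL·ζ₃ + √φ(γλ̄+1)·ζ₄ ≤ (1−(m/2)αμ)·ζ₄. -/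
/-- Part (d) of the proof of Lemma 2 of "Compressed Differentially Private
Distributed Optimization with Linear Convergence": the fourth row of the
componentwise inequality G·ζ ≤ (1−(m/2)αμ)·ζ with ζ = (ζ₁, ζ₂, Lζ₃, ζ₄, Lζ₅),
where φ is the compressor contraction parameter. -/
theorem stmt_14 (μ L m φ ρ lam γ α ζ₁ ζ₂ ζ₃ ζ₄ : ℝ)
    (hμ : 0 < μ) (hμL : μ ≤ L)
    (hm0 : 0 < m) (hm1 : m < 1)
    (hφ0 : 0 ≤ φ) (hφ1 : φ < 1)
    (hρ0 : 0 ≤ ρ) (hρ1 : ρ < 1)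
    (hlam : 0 < lam) (hγ : 0 < γ) (hα : 0 < α)
    (hζ₁ : 0 < ζ₁) (hζ₂ : 0 < ζ₂) (hζ₃ : 0 < ζ₃) (hζ₄ : 0 < ζ₄)
    (h1 : α ≤ γ * lam / L)
    (h2 : 2 * Real.sqrt φ * γ * lam * (2 * ζ₁ + ζ₂ + ζ₃ + ζ₄)
        ≤ (1 - Real.sqrt φ) * ζ₄)
    (h3 : γ * lam * m * μ ≤ (1 - Real.sqrt φ) * L) :
    Real.sqrt φ * (γ * lam + α * L) * ζ₁ + Real.sqrt φ * α * L * ζ₂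
      + Real.sqrt φ * α * L * ζ₃ + Real.sqrt φ * (γ * lam + 1) * ζ₄
      ≤ (1 - m / 2 * α * μ) * ζ₄ := by
  set s := Real.sqrt φ with hs
  have hs0 : 0 ≤ s := Real.sqrt_nonneg φ
  have hs1 : s < 1 := by
    rw [hs, show (1:ℝ) = Real.sqrt 1 by simp]
    exact Real.sqrt_lt_sqrt hφ0 hφ1
  have hL : 0 < L := lt_of_lt_of_le hμ hμL
  have hαL : α * L ≤ γ * lam := (le_div_iff₀ hL).mp h1
  -- mαμ ≤ 1 - s
  have key : m * α * μ ≤ 1 - s := by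
    have h4 : α * L * (m * μ) ≤ γ * lam * (m * μ) := by
      apply mul_le_mul_of_nonneg_right hαL; positivity
    nlinarith [mul_pos hμ hL]
  have step : s * γ * lam * (2 * ζ₁ + ζ₂ + ζ₃ + ζ₄) ≤ (1 - s) * ζ₄ / 2 := by
    linarith
  have hd : 0 ≤ γ * lam - α * L := by linarith
  nlinarith [step, mul_nonneg (mul_nonneg hs0 hd) hζ₁.le,
    mul_nonneg (mul_nonneg hs0 hd) hζ₂.le,
    mul_nonneg (mul_nonneg hs0 hd) hζ₃.le,
    mul_le_mul_of_nonneg_right key hζ₄.le]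
end
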